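/- arXiv:2306.15132 — 12 statements merged into one kernel-verified Lean document; each statement's English description precedes it below -/
import Mathlib

section
/- With T, A, μ, V as above, define Γ₀ z = z_− + V z_+ and Γ₁ z = −μ z_− − conj(μ) V z_+ for z = z_T + z_+ + z_− in the von Neumann decomposition of D(T*). Then for every x, y ∈ D(T*): ⟨T* x, y⟩ − ⟨x, T* y⟩ = ⟨Γ₁ x, Γ₀ y⟩ − ⟨Γ₀ x, Γ₁ y⟩. -/
open scoped ComplexInnerProductSpace

/-- `InDef T μ y` says that `y` lies in the deficiency space `Ker (T* − μ)`. -/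
def InDef {H : Type*} [NormedAddCommGroup H] [InnerProductSpace ℂ H] [CompleteSpace H]
    (T : H →ₗ.[ℂ] H) (μ : ℂ) (y : H) : Prop :=
  ∃ h : y ∈ T.adjoint.domain, T.adjoint ⟨y, h⟩ = μ • y

/-- With `T`, `A`, `μ`, `V` as in the von Neumann setting, defining
`Γ₀ z = z₋ + V z₊` and `Γ₁ z = −μ z₋ − conj μ • V z₊` for
`z = z_T + z₊ + z₋` in the von Neumann decomposition of `D(T*)`, the Lagrange identity
`⟪T* x, y⟫ − ⟪x, T* y⟫ = ⟪Γ₁ x, Γ₀ y⟫ − ⟪Γ₀ x, Γ₁ y⟫` holds for all `x, y ∈ D(T*)`. -/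
theorem stmt_2
    {H : Type*} [NormedAddCommGroup H] [InnerProductSpace ℂ H] [CompleteSpace H]
    (T A : H →ₗ.[ℂ] H)
    (hT_dense : Dense (T.domain : Set H))
    (hT_closed : IsClosed (T.graph : Set (H × H)))
    (hT_symm : ∀ u v : T.domain, ⟪T u, (v : H)⟫ = ⟪(u : H), T v⟫)
    (hTA : T ≤ A) (hA_sa : A.adjoint = A) (hA_le : A ≤ T.adjoint)
    (μ : ℂ) (hμ : μ.im ≠ 0)
    (V : H →ₗ[ℂ] H)
    (hV_inner : ∀ a b : H, InDef T μ a → InDef T μ b → ⟪V a, V b⟫ = ⟪a, b⟫)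
    (hV_into : ∀ y : H, InDef T μ y → InDef T (starRingEnd ℂ μ) (V y))
    (hA_dom : (A.domain : Set H) =
      {z | ∃ x ∈ T.domain, ∃ y, InDef T μ y ∧ z = x + y - V y})
    (x y xT xp xm yT yp ym : H)
    (hx : x ∈ T.adjoint.domain) (hy : y ∈ T.adjoint.domain)
    (hxT : xT ∈ T.domain) (hyT : yT ∈ T.domain)
    (hxp : InDef T μ xp) (hyp : InDef T μ yp)
    (hxm : InDef T (starRingEnd ℂ μ) xm) (hym : InDef T (starRingEnd ℂ μ) ym)
    (hxdec : x = xT + xp + xm) (hydec : y = yT + yp + ym) :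
    ⟪T.adjoint ⟨x, hx⟩, y⟫ - ⟪x, T.adjoint ⟨y, hy⟩⟫
      = ⟪-(μ • xm) - (starRingEnd ℂ μ) • V xp, ym + V yp⟫
        - ⟪xm + V xp, -(μ • ym) - (starRingEnd ℂ μ) • V yp⟫ := by
  classical
  obtain ⟨hxp', hxp_eq⟩ := hxp
  obtain ⟨hyp', hyp_eq⟩ := hyp
  obtain ⟨hxm', hxm_eq⟩ := hxm
  obtain ⟨hym', hym_eq⟩ := hym
  have hle : T ≤ T.adjoint := hTA.trans hA_le
  have hxT' : xT ∈ T.adjoint.domain := hle.1 hxT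
  have hyT' : yT ∈ T.adjoint.domain := hle.1 hyT
  have hxT_eq : T.adjoint ⟨xT, hxT'⟩ = T ⟨xT, hxT⟩ := (hle.2 (x := ⟨xT, hxT⟩) (y := ⟨xT, hxT'⟩) rfl).symm
  have hyT_eq : T.adjoint ⟨yT, hyT'⟩ = T ⟨yT, hyT⟩ := (hle.2 (x := ⟨yT, hyT⟩) (y := ⟨yT, hyT'⟩) rfl).symm
  -- decompose the adjoint values
  have hx_sum : (⟨x, hx⟩ : T.adjoint.domain) = ⟨xT, hxT'⟩ + ⟨xp, hxp'⟩ + ⟨xm, hxm'⟩ := by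
    ext; simpa using hxdec
  have hy_sum : (⟨y, hy⟩ : T.adjoint.domain) = ⟨yT, hyT'⟩ + ⟨yp, hyp'⟩ + ⟨ym, hym'⟩ := by
    ext; simpa using hydec
  have ex : T.adjoint ⟨x, hx⟩ = T ⟨xT, hxT⟩ + μ • xp + (starRingEnd ℂ μ) • xm := by
    rw [hx_sum, T.adjoint.map_add, T.adjoint.map_add, hxT_eq, hxp_eq, hxm_eq]
  have ey : T.adjoint ⟨y, hy⟩ = T ⟨yT, hyT⟩ + μ • yp + (starRingEnd ℂ μ) • ym := by
    rw [hy_sum, T.adjoint.map_add, T.adjoint.map_add, hyT_eq, hyp_eq, hym_eq]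
  have hFA : T.adjoint.IsFormalAdjoint T := LinearPMap.adjoint_isFormalAdjoint hT_dense
  -- pairings of T-values with deficiency vectors
  have key : ∀ (u : T.domain) (w : H) (hw : w ∈ T.adjoint.domain) (c : ℂ),
      T.adjoint ⟨w, hw⟩ = c • w → ⟪(T u : H), w⟫ = c • ⟪(u : H), w⟫ := by
    intro u w hw c hc
    have := hFA ⟨w, hw⟩ u
    rw [hc] at this
    calc ⟪(T u : H), w⟫ = starRingEnd ℂ ⟪w, (T u : H)⟫ := (inner_conj_symm _ _).symm
      _ = starRingEnd ℂ ⟪(c • w : H), (u : H)⟫ := by rw [← this]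
      _ = c • ⟪(u : H), w⟫ := by
          rw [inner_smul_left, map_mul, Complex.conj_conj, inner_conj_symm, smul_eq_mul]
  have k1 : ⟪(T ⟨xT, hxT⟩ : H), yp⟫ = μ * ⟪xT, yp⟫ := key _ _ hyp' μ hyp_eq
  have k2 : ⟪(T ⟨xT, hxT⟩ : H), ym⟫ = (starRingEnd ℂ μ) * ⟪xT, ym⟫ :=
    key _ _ hym' _ hym_eq
  have k3 : ⟪(T ⟨yT, hyT⟩ : H), xp⟫ = μ * ⟪yT, xp⟫ := key _ _ hxp' μ hxp_eq
  have k4 : ⟪(T ⟨yT, hyT⟩ : H), xm⟫ = (starRingEnd ℂ μ) * ⟪yT, xm⟫ :=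
    key _ _ hxm' _ hxm_eq
  have k3' : ⟪xp, (T ⟨yT, hyT⟩ : H)⟫ = (starRingEnd ℂ μ) * ⟪xp, yT⟫ := by
    rw [← inner_conj_symm, k3, map_mul, inner_conj_symm]
  have k4' : ⟪xm, (T ⟨yT, hyT⟩ : H)⟫ = μ * ⟪xm, yT⟫ := by
    rw [← inner_conj_symm, k4, map_mul, inner_conj_symm]
    simp
  have hsymm : ⟪(T ⟨xT, hxT⟩ : H), yT⟫ = ⟪xT, (T ⟨yT, hyT⟩ : H)⟫ := hT_symm ⟨xT, hxT⟩ ⟨yT, hyT⟩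
  have hVpp : ⟪V xp, V yp⟫ = ⟪xp, yp⟫ := hV_inner xp yp ⟨hxp', hxp_eq⟩ ⟨hyp', hyp_eq⟩
  rw [ex, ey, hxdec, hydec]
  simp only [inner_add_left, inner_add_right, inner_sub_left, inner_sub_right,
    inner_smul_left, inner_smul_right, inner_neg_left, inner_neg_right,
    k1, k2, k3', k4', hsymm, hVpp, Complex.conj_conj]
  ring
end

section
/- Let T be a closed densely defined symmetric operator in H, μ ∈ ℂ \ ℝ, and let U_μ(T) denote the μ-Cayley transform: the partial isometry equal to (T − μ)(T − conj(μ))⁻¹ on Im(T − conj(μ)) and 0 on its orthogonal complement. If A is a self-adjoint extension of T with associated von Neumann isometry V, and V₀ denotes the partial isometry of H equal to V on Ker(T* − μ) and 0 on its orthogonal complement, then U_μ(A) = U_μ(T) + V₀. -/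
open scoped ComplexInnerProductSpace

/-- Let `U_μ(T)` be the μ-Cayley transform of `T`: the partial isometry equal to
`(T − μ)(T − conj μ)⁻¹` on `Im(T − conj μ)` and `0` on its orthogonal complement. If `A` is a
self-adjoint extension of `T` with associated von Neumann isometry `V`, and `V₀` is the
partial isometry equal to `V` on `Ker(T* − μ)` and `0` on its orthogonal complement, then
`U_μ(A) = U_μ(T) + V₀` (here `U_μ(A)` is the everywhere defined isometry
`(A − μ)(A − conj μ)⁻¹`). -/
theorem stmt_3
    {H : Type*} [NormedAddCommGroup H] [InnerProductSpace ℂ H] [CompleteSpace H]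
    (T A : H →ₗ.[ℂ] H)
    (hT_dense : Dense (T.domain : Set H))
    (hT_closed : IsClosed (T.graph : Set (H × H)))
    (hT_symm : ∀ u v : T.domain, ⟪T u, (v : H)⟫ = ⟪(u : H), T v⟫)
    (hTA : T ≤ A) (hA_sa : A.adjoint = A) (hA_le : A ≤ T.adjoint)
    (μ : ℂ) (hμ : μ.im ≠ 0)
    (V : H →ₗ[ℂ] H)
    (hV_iso : ∀ y : H, InDef T μ y → ‖V y‖ = ‖y‖)
    (hV_into : ∀ y : H, InDef T μ y → InDef T (starRingEnd ℂ μ) (V y))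
    (hA_dom : (A.domain : Set H) =
      {z | ∃ x ∈ T.domain, ∃ y, InDef T μ y ∧ z = x + y - V y})
    (hV_formula : ∀ y : H, InDef T μ y →
      ∀ w (hw : w ∈ A.domain), A ⟨w, hw⟩ - (starRingEnd ℂ μ) • w = y →
        V y = A ⟨w, hw⟩ - μ • w)
    (UT UA V0 : H →ₗ[ℂ] H)
    -- `UT` is the μ-Cayley transform of `T`:
    (hUT_on : ∀ u : T.domain,
      UT (T u - (starRingEnd ℂ μ) • (u : H)) = T u - μ • (u : H))
    (hUT_perp : ∀ w : H,
      (∀ u : T.domain, ⟪w, T u - (starRingEnd ℂ μ) • (u : H)⟫ = 0) → UT w = 0)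
    -- `UA` is the μ-Cayley transform of `A`:
    (hUA_on : ∀ w (hw : w ∈ A.domain),
      UA (A ⟨w, hw⟩ - (starRingEnd ℂ μ) • w) = A ⟨w, hw⟩ - μ • w)
    -- `V0` is the partial isometry extending `V` by zero:
    (hV0_on : ∀ y : H, InDef T μ y → V0 y = V y)
    (hV0_perp : ∀ w : H, (∀ y : H, InDef T μ y → ⟪w, y⟫ = 0) → V0 w = 0) :
    ∀ z : H, UA z = UT z + V0 z := by
  classical
  intro z
  set ν := (starRingEnd ℂ) μ with hν_def
  -- Part 1: the lower bound ‖(T - ν)u‖ ≥ |Im μ| ‖u‖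
  have key_norm : ∀ u : T.domain, |μ.im| * ‖(u:H)‖ ≤ ‖T u - ν • (u:H)‖ := by
    intro u
    have hreal : (⟪T u, (u:H)⟫ : ℂ).im = 0 := by
      have h1 : ⟪(u:H), T u⟫ = (starRingEnd ℂ) ⟪T u, (u:H)⟫ := (inner_conj_symm _ _).symm
      exact Complex.conj_eq_iff_im.mp (((hT_symm u u).trans h1).symm)
    have him : (⟪T u - (μ.re:ℂ) • (u:H), (u:H)⟫ : ℂ).im = 0 := by
      rw [inner_sub_left, inner_smul_left]
      have h0 : (⟪(u:H),(u:H)⟫ : ℂ).im = 0 := Complex.conj_eq_iff_im.mp (inner_conj_symm _ _)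
      simp [Complex.sub_im, Complex.mul_im, hreal, h0, ← Complex.ofReal_pow]
    have hdecomp : T u - ν • (u:H)
        = (T u - (μ.re:ℂ) • (u:H)) + ((μ.im:ℂ) * Complex.I) • (u:H) := by
      have : ν = (μ.re:ℂ) - (μ.im:ℂ) * Complex.I := by
        simp [hν_def, Complex.ext_iff]
      rw [this]; module
    have hsq : ‖T u - ν • (u:H)‖ ^ 2
        = ‖T u - (μ.re:ℂ) • (u:H)‖ ^ 2 + ‖((μ.im:ℂ) * Complex.I) • (u:H)‖ ^ 2 := by
      rw [hdecomp, @norm_add_sq ℂ]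
      have : (RCLike.re (⟪T u - (μ.re:ℂ) • (u:H), ((μ.im:ℂ) * Complex.I) • (u:H)⟫ : ℂ) : ℝ) = 0 := by
        rw [inner_smul_right]
        have him' : (⟪T u - μ.re • (u:H), (u:H)⟫ : ℂ).im = 0 := by
          rwa [show μ.re • (u:H) = (μ.re : ℂ) • (u:H) from (Complex.coe_smul _ _).symm]
        simp [Complex.mul_re, Complex.mul_im, Complex.I_re, Complex.I_im, him']
      rw [this]; ring
    have hnorm : ‖((μ.im:ℂ) * Complex.I) • (u:H)‖ = |μ.im| * ‖(u:H)‖ := by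
      rw [norm_smul]
      simp [Complex.norm_def, Complex.normSq_mk, Complex.norm_real, Real.sqrt_mul_self_eq_abs]
    have h2 : (|μ.im| * ‖(u:H)‖) ^ 2 ≤ ‖T u - ν • (u:H)‖ ^ 2 := by
      rw [hsq, hnorm]; exact le_add_of_nonneg_left (by positivity)
    have := Real.sqrt_le_sqrt h2
    rwa [Real.sqrt_sq (by positivity), Real.sqrt_sq (by positivity)] at this
  have him_pos : (0:ℝ) < |μ.im| := abs_pos.mpr hμ
  -- Part 2: the range of (T - ν) is a closed submodule
  set S : T.domain →ₗ[ℂ] H := T.toFun - ν • T.domain.subtype with hS_def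
  have hS_apply : ∀ u : T.domain, S u = T u - ν • (u:H) := fun u => rfl
  set R : Submodule ℂ H := LinearMap.range S with hR_def
  have hR_closed : IsClosed (R : Set H) := by
    rw [← isSeqClosed_iff_isClosed]
    intro zs z0 hzs hz0
    choose u hu using fun n => LinearMap.mem_range.mp (hzs n)
    have hcau : CauchySeq (fun n => ((u n : H))) := by
      rw [Metric.cauchySeq_iff]
      intro ε hε
      obtain ⟨N, hN⟩ := Metric.cauchySeq_iff.mp hz0.cauchySeq (|μ.im| * ε)
        (by positivity)
      refine ⟨N, fun m hm n hn => ?_⟩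
      have h1 : |μ.im| * ‖((u m : H)) - ((u n : H))‖ ≤ ‖zs m - zs n‖ := by
        have := key_norm (u m - u n)
        rw [T.map_sub] at this
        simp only [AddSubgroupClass.coe_sub] at this
        have heq : T (u m) - T (u n) - ν • (((u m : H)) - ((u n : H)))
            = S (u m) - S (u n) := by
          rw [hS_apply, hS_apply]; module
        rw [heq, hu, hu] at this
        simpa using this
      have h2 : ‖zs m - zs n‖ < |μ.im| * ε := by
        have := hN m hm n hn; rwa [dist_eq_norm] at this
      rw [dist_eq_norm]
      have := h1.trans_lt h2
      exact lt_of_mul_lt_mul_left this (le_of_lt him_pos)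
    obtain ⟨l, hl⟩ := cauchySeq_tendsto_of_complete hcau
    have hTu : Filter.Tendsto (fun n => (T (u n) : H)) Filter.atTop (nhds (z0 + ν • l)) := by
      have heq : ∀ n, (T (u n) : H) = zs n + ν • ((u n : H)) := by
        intro n
        have := hu n
        rw [hS_apply] at this
        rw [← this]; abel
      rw [show (fun n => (T (u n) : H)) = fun n => zs n + ν • ((u n : H)) from funext heq]
      exact hz0.add (hl.const_smul ν)
    have hmem : (l, z0 + ν • l) ∈ T.graph :=
      hT_closed.mem_of_tendsto (hl.prodMk_nhds hTu)
        (Filter.Eventually.of_forall fun n => T.mem_graph (u n))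
    rw [LinearPMap.mem_graph_iff] at hmem
    obtain ⟨u', hu'1, hu'2⟩ := hmem
    refine LinearMap.mem_range.mpr ⟨u', ?_⟩
    rw [hS_apply, hu'2, hu'1]; module
  -- Part 3: facts about the deficiency space
  have hadj := LinearPMap.adjoint_isFormalAdjoint hT_dense
  have indef_perp : ∀ y : H, InDef T μ y → ∀ u : T.domain,
      ⟪y, T u - ν • (u:H)⟫ = 0 := by
    rintro y ⟨hyd, hyv⟩ u
    have h1 : ⟪T.adjoint ⟨y, hyd⟩, (u:H)⟫ = ⟪y, T u⟫ := hadj ⟨y, hyd⟩ u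
    rw [hyv, inner_smul_left] at h1
    rw [inner_sub_right, inner_smul_right, ← h1, hν_def]
    ring
  have indef_smul : ∀ (c : ℂ) (y : H), InDef T μ y → InDef T μ (c • y) := by
    rintro c y ⟨hyd, hyv⟩
    refine ⟨T.adjoint.domain.smul_mem c hyd, ?_⟩
    have heq : (⟨c • y, T.adjoint.domain.smul_mem c hyd⟩ : T.adjoint.domain)
        = c • (⟨y, hyd⟩ : T.adjoint.domain) := rfl
    rw [heq, T.adjoint.map_smul, hyv, smul_comm]
  -- Part 4: orthogonal decomposition z = p + q
  haveI : CompleteSpace R := hR_closed.completeSpace_coe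
  obtain ⟨p, hp, q, hq, hzpq⟩ := R.exists_add_mem_mem_orthogonal z
  obtain ⟨ux, hux⟩ := LinearMap.mem_range.mp hp
  have hux' : p = T ux - ν • (ux : H) := by rw [← hux, hS_apply]
  -- q is in the deficiency space
  have hq_perp : ∀ u : T.domain, ⟪T u - ν • (u:H), q⟫ = 0 := fun u =>
    (Submodule.mem_orthogonal R q).mp hq _ (LinearMap.mem_range.mpr ⟨u, (hS_apply u).symm⟩)
  have hq_inner : ∀ u : T.domain, ⟪μ • q, (u:H)⟫ = ⟪q, T u⟫ := by
    intro u
    have h0 := hq_perp u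
    rw [inner_sub_left, inner_smul_left, sub_eq_zero] at h0
    have h1 := congrArg (starRingEnd ℂ) h0
    rw [inner_conj_symm, map_mul, inner_conj_symm] at h1
    rw [inner_smul_left, h1, hν_def]
    simp
  have hq_dom : q ∈ T.adjoint.domain :=
    T.mem_adjoint_domain_of_exists q ⟨μ • q, hq_inner⟩
  have hq_def : InDef T μ q :=
    ⟨hq_dom, LinearPMap.adjoint_apply_eq hT_dense _ hq_inner⟩
  -- Part 5: the main computation
  have hc : μ - ν ≠ 0 := by
    intro h
    have := congrArg Complex.im h
    simp [hν_def, Complex.sub_im, Complex.conj_im] at this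
    exact hμ (by linarith)
  set y : H := (μ - ν)⁻¹ • q with hy_eq
  have hy_def : InDef T μ y := indef_smul _ _ hq_def
  have hqy : q = (μ - ν) • y := by
    rw [hy_eq, smul_smul, mul_inv_cancel₀ hc, one_smul]
  set x : H := (ux : H) with hx_eq
  have hw_mem : x + y - V y ∈ A.domain := by
    rw [← SetLike.mem_coe, hA_dom]
    exact ⟨x, ux.2, y, hy_def, rfl⟩
  obtain ⟨hyd, hyv⟩ := hy_def
  obtain ⟨hVyd, hVyv⟩ := hV_into y ⟨hyd, hyv⟩
  have hTle : T ≤ T.adjoint := hTA.trans hA_le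
  have hA_w : A ⟨x + y - V y, hw_mem⟩ = T ux + μ • y - ν • V y := by
    have h1 : A ⟨x + y - V y, hw_mem⟩ = T.adjoint ⟨x + y - V y, hA_le.1 hw_mem⟩ :=
      hA_le.2 rfl
    have hx' : x ∈ T.adjoint.domain := hTle.1 ux.2
    have heq : (⟨x + y - V y, hA_le.1 hw_mem⟩ : T.adjoint.domain)
        = (⟨x, hx'⟩ + ⟨y, hyd⟩ - ⟨V y, hVyd⟩ : T.adjoint.domain) := rfl
    have hx'' : T.adjoint ⟨x, hx'⟩ = T ux := (hTle.2 rfl).symm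
    rw [h1, heq, T.adjoint.map_sub, T.adjoint.map_add, hx'', hyv, hVyv]
  have hz_eq : A ⟨x + y - V y, hw_mem⟩ - ν • (x + y - V y) = z := by
    rw [hA_w, hzpq, hux', hqy]; module
  have hUAz : UA z = T ux - μ • x + (μ - ν) • V y := by
    have h0 := hUA_on _ hw_mem
    rw [hz_eq] at h0
    rw [h0, hA_w]; module
  have hUTz : UT z = T ux - μ • x := by
    have h1 : UT p = T ux - μ • x := by
      rw [hux']; exact hUT_on ux
    have h2 : UT q = 0 := by
      refine hUT_perp q (fun u => ?_)
      rw [← inner_conj_symm, hq_perp u, map_zero]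
    rw [hzpq, map_add, h1, h2, add_zero]
  have hV0z : V0 z = (μ - ν) • V y := by
    have h1 : V0 p = 0 := by
      refine hV0_perp p (fun y' hy' => ?_)
      rw [← inner_conj_symm, hux', indef_perp y' hy' ux, map_zero]
    have h2 : V0 q = (μ - ν) • V y := by
      rw [hqy, map_smul, hV0_on y ⟨hyd, hyv⟩]
    rw [hzpq, map_add, h1, h2, zero_add]
  rw [hUAz, hUTz, hV0z]
end

section
/- Let T be a closed densely defined symmetric operator in H with self-adjoint extension A, and let (Ker(T* + i), Γ₀, Γ₁) be the boundary triplet for T* constructed from A with μ = i. Let B be a bounded self-adjoint operator on Ker(T* + i) and A' the self-adjoint extension of T given by the restriction of T* to Ker(Γ₁ − B Γ₀). Then the Cayley transforms satisfy U(A') = U(B)_H ∘ U(A), where U(·) denotes the Cayley transform (X − i)(X + i)⁻¹ and U(B)_H is the unitary operator of H equal to U(B) on Ker(T* + i) and the identity on its orthogonal complement. -/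
open scoped ComplexInnerProductSpace

section AuxLemmas
variable {H : Type*} [NormedAddCommGroup H] [InnerProductSpace ℂ H] [CompleteSpace H]
  {T : H →ₗ.[ℂ] H} {μ : ℂ} {y z : H}

lemma InDef.smul (h : InDef T μ y) (c : ℂ) : InDef T μ (c • y) := by
  obtain ⟨hm, hv⟩ := h
  refine ⟨T.adjoint.domain.smul_mem c hm, ?_⟩
  have h2 : (⟨c • y, T.adjoint.domain.smul_mem c hm⟩ : T.adjoint.domain) = c • ⟨y, hm⟩ := rfl
  rw [h2, LinearPMap.map_smul, hv, smul_comm]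

lemma InDef.add (h : InDef T μ y) (h' : InDef T μ z) : InDef T μ (y + z) := by
  obtain ⟨hm, hv⟩ := h; obtain ⟨hm', hv'⟩ := h'
  refine ⟨add_mem hm hm', ?_⟩
  have h2 : (⟨y + z, add_mem hm hm'⟩ : T.adjoint.domain) = ⟨y, hm⟩ + ⟨z, hm'⟩ := rfl
  rw [h2, LinearPMap.map_add, hv, hv', smul_add]

lemma InDef.sub (h : InDef T μ y) (h' : InDef T μ z) : InDef T μ (y - z) := by
  obtain ⟨hm, hv⟩ := h; obtain ⟨hm', hv'⟩ := h'
  refine ⟨sub_mem hm hm', ?_⟩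
  have h2 : (⟨y - z, sub_mem hm hm'⟩ : T.adjoint.domain) = ⟨y, hm⟩ - ⟨z, hm'⟩ := rfl
  rw [h2, LinearPMap.map_sub, hv, hv', smul_sub]

namespace StmtAux
lemma inDef_iff (hT : Dense (T.domain : Set H)) {μ : ℂ} {y : H} :
    InDef T μ y ↔ ∀ x : T.domain, ⟪μ • y, (x : H)⟫ = ⟪y, T x⟫ := by
  constructor
  · rintro ⟨hm, hv⟩ x
    rw [← hv]
    exact LinearPMap.adjoint_isFormalAdjoint hT ⟨y, hm⟩ x
  · intro h
    have hm : y ∈ T.adjoint.domain :=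
      LinearPMap.mem_adjoint_domain_of_exists y ⟨μ • y, h⟩
    exact ⟨hm, LinearPMap.adjoint_apply_eq hT ⟨y, hm⟩ h⟩

lemma pyth {a b : H} (h : (starRingEnd ℂ) ⟪a, b⟫ = ⟪a, b⟫) :
    ‖a + Complex.I • b‖ ^ 2 = ‖a‖ ^ 2 + ‖b‖ ^ 2 := by
  rw [@norm_add_sq ℂ, inner_smul_right, norm_smul]
  have him : (⟪a, b⟫).im = 0 := Complex.conj_eq_iff_im.mp h
  simp [Complex.mul_re, him, Complex.norm_I]

lemma norm_le_of_pyth {a b c : H} (h : ‖c‖ ^ 2 = ‖a‖ ^ 2 + ‖b‖ ^ 2) : ‖b‖ ≤ ‖c‖ := by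
  nlinarith [norm_nonneg a, norm_nonneg b, norm_nonneg c]

lemma cauchySeq_of_le {u x : ℕ → H} (hu : CauchySeq u)
    (h : ∀ m n, ‖x m - x n‖ ≤ ‖u m - u n‖) : CauchySeq x := by
  rw [Metric.cauchySeq_iff] at hu ⊢
  intro ε hε
  obtain ⟨N, hN⟩ := hu ε hε
  exact ⟨N, fun m hm n hn => lt_of_le_of_lt (by simpa [dist_eq_norm] using h m n) (hN m hm n hn)⟩

end StmtAux

namespace StmtAux
variable {H : Type*} [NormedAddCommGroup H] [InnerProductSpace ℂ H] [CompleteSpace H]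
  {T : H →ₗ.[ℂ] H}

lemma rangeL_closed (hT_closed : IsClosed (T.graph : Set (H × H)))
    (hT_symm : ∀ u v : T.domain, ⟪T u, (v : H)⟫ = ⟪(u : H), T v⟫) :
    IsClosed ((LinearMap.range (T.toFun + Complex.I • T.domain.subtype) : Submodule ℂ H) : Set H) := by
  set L := T.toFun + Complex.I • T.domain.subtype with hL
  have hLapp : ∀ x : T.domain, L x = T x + Complex.I • (x : H) := fun x => rfl
  have hreal : ∀ d : T.domain, (starRingEnd ℂ) ⟪T d, (d : H)⟫ = ⟪T d, (d : H)⟫ := by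
    intro d
    rw [inner_conj_symm]
    exact (hT_symm d d).symm
  clear_value L
  subst hL
  apply IsSeqClosed.isClosed
  intro u z hu hlim
  choose xs hxs using fun n => LinearMap.mem_range.mp (hu n)
  have hpyth : ∀ m n : ℕ, ‖u m - u n‖ ^ 2 =
      ‖T (xs m - xs n)‖ ^ 2 + ‖((xs m - xs n : T.domain) : H)‖ ^ 2 := by
    intro m n
    have : u m - u n = T (xs m - xs n) + Complex.I • ((xs m - xs n : T.domain) : H) := by
      rw [← hxs m, ← hxs n, ← map_sub]
      exact hLapp _
    rw [this]
    exact StmtAux.pyth (hreal _)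
  have hcu : CauchySeq u := hlim.cauchySeq
  have hc1 : CauchySeq (fun n => ((xs n : H))) := by
    apply StmtAux.cauchySeq_of_le hcu
    intro m n
    refine StmtAux.norm_le_of_pyth (a := T (xs m - xs n)) ?_
    rw [hpyth m n, AddSubgroupClass.coe_sub]
  have hc2 : CauchySeq (fun n => T (xs n)) := by
    apply StmtAux.cauchySeq_of_le hcu
    intro m n
    have h2 : ‖u m - u n‖ ^ 2 = ‖((xs m - xs n : T.domain) : H)‖ ^ 2 + ‖T (xs m - xs n)‖ ^ 2 := by
      rw [hpyth m n]; ring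
    refine StmtAux.norm_le_of_pyth (a := ((xs m - xs n : T.domain) : H)) ?_
    rw [← T.map_sub]
    exact h2
  obtain ⟨xl, hxl⟩ := cauchySeq_tendsto_of_complete hc1
  obtain ⟨w, hw⟩ := cauchySeq_tendsto_of_complete hc2
  have hgr : (xl, w) ∈ T.graph := by
    refine hT_closed.mem_of_tendsto (hxl.prodMk_nhds hw) ?_
    exact Filter.Eventually.of_forall fun n => T.mem_graph (xs n)
  rw [LinearPMap.mem_graph_iff] at hgr
  obtain ⟨yl, hy1, hy2⟩ := hgr
  have hulim : Filter.Tendsto u Filter.atTop (nhds (w + Complex.I • xl)) := by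
    have hfe : u = fun n => T (xs n) + Complex.I • ((xs n : H)) :=
      funext fun n => by rw [← hxs n]; exact hLapp _
    rw [hfe]
    exact hw.add ((hxl.const_smul _))
  have hz : z = w + Complex.I • xl := tendsto_nhds_unique hlim hulim
  refine LinearMap.mem_range.mpr ⟨yl, ?_⟩
  rw [hLapp, hy2, hy1, hz]
end StmtAux

namespace StmtAux
variable {H : Type*} [NormedAddCommGroup H] [InnerProductSpace ℂ H] [CompleteSpace H]
  {T : H →ₗ.[ℂ] H}

lemma s_surj (hT_dense : Dense (T.domain : Set H))
    (hT_closed : IsClosed (T.graph : Set (H × H)))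
    (hT_symm : ∀ u v : T.domain, ⟪T u, (v : H)⟫ = ⟪(u : H), T v⟫) :
    ∀ z : H, ∃ (x : T.domain) (y : H), InDef T Complex.I y ∧
      z = (T x + Complex.I • (x : H)) + (2 * Complex.I) • y := by
  intro z
  set L := T.toFun + Complex.I • T.domain.subtype with hL
  have hLapp : ∀ x : T.domain, L x = T x + Complex.I • (x : H) := fun x => rfl
  set S := LinearMap.range L with hS
  have hSC : IsClosed (S : Set H) := rangeL_closed hT_closed hT_symm
  haveI : CompleteSpace S := hSC.completeSpace_coe
  obtain ⟨s, hsS, uo, huoS, hz⟩ := S.exists_add_mem_mem_orthogonal z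
  obtain ⟨x, hx⟩ := LinearMap.mem_range.mp hsS
  -- elements of `Sᗮ` lie in the deficiency space `Ker (T* - i)`
  have huoD : InDef T Complex.I uo := by
    rw [inDef_iff hT_dense]
    intro x'
    have h0 : ⟪T x' + Complex.I • (x' : H), uo⟫ = 0 :=
      (Submodule.mem_orthogonal S uo).mp huoS _ ⟨x', hLapp x'⟩
    rw [inner_add_left, inner_smul_left, Complex.conj_I] at h0
    have h1 : ⟪(uo : H), T x'⟫ = (starRingEnd ℂ) ⟪T x', uo⟫ := (inner_conj_symm _ _).symm
    rw [h1, inner_smul_left, Complex.conj_I]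
    have h2 : ⟪T x', uo⟫ = Complex.I * ⟪(x' : H), uo⟫ := by linear_combination h0
    rw [h2, map_mul, Complex.conj_I, inner_conj_symm]
  have h2I : (2 * Complex.I) ≠ 0 := by simp [Complex.I_ne_zero]
  refine ⟨x, (2 * Complex.I)⁻¹ • uo, huoD.smul _, ?_⟩
  rw [smul_smul, mul_inv_cancel₀ h2I, one_smul, hz, ← hx, hLapp]

end StmtAux
lemma InDef.zero (T : H →ₗ.[ℂ] H) (μ : ℂ) : InDef T μ (0 : H) := by
  refine ⟨zero_mem _, ?_⟩
  have h2 : (⟨(0:H), zero_mem _⟩ : T.adjoint.domain) = 0 := rfl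
  rw [h2, LinearPMap.map_zero, smul_zero]

namespace StmtAux
lemma km_closed (hT_dense : Dense (T.domain : Set H)) (μ : ℂ) :
    IsClosed {v : H | InDef T μ v} := by
  have h : {v : H | InDef T μ v} =
      ⋂ (x : T.domain), {v : H | ⟪μ • v, (x : H)⟫ = ⟪v, T x⟫} := by
    ext v
    simp only [Set.mem_setOf_eq, Set.mem_iInter, inDef_iff hT_dense]
  rw [h]
  exact isClosed_iInter fun x => isClosed_eq
    ((continuous_id.const_smul μ).inner continuous_const)
    (continuous_id.inner continuous_const)

lemma b_surj (hT_dense : Dense (T.domain : Set H)) (B : H →L[ℂ] H)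
    (hB_maps : ∀ z : H, InDef T (-Complex.I) z → InDef T (-Complex.I) (B z))
    (hB_sa : ∀ u v : H, InDef T (-Complex.I) u → InDef T (-Complex.I) v →
      ⟪B u, v⟫ = ⟪u, B v⟫) :
    ∀ u : H, InDef T (-Complex.I) u →
      ∃ v, InDef T (-Complex.I) v ∧ B v + Complex.I • v = u := by
  have hreal : ∀ v : H, InDef T (-Complex.I) v →
      (starRingEnd ℂ) ⟪B v, v⟫ = ⟪B v, v⟫ := by
    intro v hv
    rw [inner_conj_symm]
    exact (hB_sa v v hv hv).symm
  -- the range of (B + i) restricted to Km, as a submodule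
  set R : Submodule ℂ H :=
    { carrier := {w | ∃ v, InDef T (-Complex.I) v ∧ B v + Complex.I • v = w}
      zero_mem' := ⟨0, InDef.zero T _, by simp⟩
      add_mem' := by
        rintro a b ⟨v1, hv1, rfl⟩ ⟨v2, hv2, rfl⟩
        exact ⟨v1 + v2, hv1.add hv2, by rw [map_add]; module⟩
      smul_mem' := by
        rintro c a ⟨v1, hv1, rfl⟩
        exact ⟨c • v1, hv1.smul c, by rw [map_smul]; module⟩ } with hR
  have hmemR : ∀ w : H, w ∈ R ↔ ∃ v, InDef T (-Complex.I) v ∧ B v + Complex.I • v = w :=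
    fun w => Iff.rfl
  have hRKm : ∀ w : H, w ∈ R → InDef T (-Complex.I) w := by
    rintro w ⟨v, hv, rfl⟩
    exact (hB_maps v hv).add (hv.smul _)
  have hKmC := km_closed hT_dense (μ := -Complex.I) (T := T)
  -- R is closed
  have hRC : IsClosed (R : Set H) := by
    apply IsSeqClosed.isClosed
    intro u z hu hlim
    choose vs hvs hvs2 using fun n => (hmemR (u n)).mp (hu n)
    have hpyth : ∀ m n : ℕ, ‖u m - u n‖ ^ 2 = ‖B (vs m - vs n)‖ ^ 2 + ‖vs m - vs n‖ ^ 2 := by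
      intro m n
      have h1 : u m - u n = B (vs m - vs n) + Complex.I • (vs m - vs n) := by
        rw [← hvs2 m, ← hvs2 n, map_sub]; module
      rw [h1]
      exact pyth (hreal _ ((hvs m).sub (hvs n)))
    have hc1 : CauchySeq vs := by
      apply cauchySeq_of_le hlim.cauchySeq
      intro m n
      exact norm_le_of_pyth (hpyth m n)
    obtain ⟨vl, hvl⟩ := cauchySeq_tendsto_of_complete hc1
    have hvlKm : InDef T (-Complex.I) vl :=
      hKmC.mem_of_tendsto hvl (Filter.Eventually.of_forall fun n => hvs n)
    have hulim : Filter.Tendsto u Filter.atTop (nhds (B vl + Complex.I • vl)) := by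
      have hfe : u = fun n => B (vs n) + Complex.I • (vs n) :=
        funext fun n => (hvs2 n).symm
      rw [hfe]
      exact (((B.continuous.tendsto vl).comp hvl).add (hvl.const_smul _))
    have hz : z = B vl + Complex.I • vl := tendsto_nhds_unique hlim hulim
    exact (hmemR z).mpr ⟨vl, hvlKm, hz.symm⟩
  -- now the surjectivity argument
  intro u hu
  haveI : CompleteSpace R := hRC.completeSpace_coe
  obtain ⟨r, hrR, p, hpR, hup⟩ := R.exists_add_mem_mem_orthogonal u
  have hpKm : InDef T (-Complex.I) p := by
    have : p = u - r := by rw [hup]; abel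
    rw [this]
    exact hu.sub (hRKm r hrR)
  -- p is orthogonal to (B - i) p ∈ ... show p = 0
  have hq : InDef T (-Complex.I) (B p - Complex.I • p) := (hB_maps p hpKm).sub (hpKm.smul _)
  have hqR : B (B p - Complex.I • p) + Complex.I • (B p - Complex.I • p) ∈ R :=
    (hmemR _).mpr ⟨_, hq, rfl⟩
  have h0 : ⟪B (B p - Complex.I • p) + Complex.I • (B p - Complex.I • p), p⟫ = 0 :=
    (Submodule.mem_orthogonal R p).mp hpR _ hqR
  have hinner : ⟪B (B p - Complex.I • p) + Complex.I • (B p - Complex.I • p), p⟫ =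
      ⟪B p - Complex.I • p, B p - Complex.I • p⟫ := by
    rw [inner_add_left, inner_smul_left, hB_sa _ p hq hpKm, inner_sub_right,
      inner_smul_right, Complex.conj_I]
    ring
  have hq0 : B p - Complex.I • p = 0 := by
    rw [h0] at hinner
    exact inner_self_eq_zero.mp hinner.symm
  have hBp : B p = Complex.I • p := by
    rwa [sub_eq_zero] at hq0
  have hp0 : p = 0 := by
    have h1 : ⟪B p, p⟫ = -Complex.I * ((‖p‖ : ℂ)) ^ 2 := by
      rw [hBp, inner_smul_left, inner_self_eq_norm_sq_to_K, Complex.conj_I]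
      norm_num
    have h4 : (⟪B p, p⟫).im = 0 := Complex.conj_eq_iff_im.mp (hreal p hpKm)
    have h5 : (-Complex.I * ((‖p‖ : ℂ)) ^ 2).im = -(‖p‖ ^ 2) := by
      simp [Complex.mul_im, ← Complex.ofReal_pow]
    rw [h1, h5] at h4
    have h6 : ‖p‖ = 0 := by nlinarith [norm_nonneg p]
    exact norm_eq_zero.mp h6
  obtain ⟨v, hv, hvv⟩ := (hmemR r).mp hrR
  exact ⟨v, hv, by rw [hvv, hup, hp0, add_zero]⟩

end StmtAux

end AuxLemmas

/-- Let `(Ker(T* + i), Γ₀, Γ₁)` be the boundary triplet for `T*` constructed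
from a self-adjoint extension `A` of `T` with `μ = i`, let `B` be a bounded self-adjoint
operator on `Ker(T* + i)`, and let `A'` be the self-adjoint extension of `T` given by the
restriction of `T*` to `Ker(Γ₁ − B Γ₀)`. Then the Cayley transforms satisfy
`U(A') = U(B)_H ∘ U(A)`, where `U(X) = (X − i)(X + i)⁻¹` and `U(B)_H` equals `U(B)` on
`Ker(T* + i)` and the identity on its orthogonal complement. -/
theorem stmt_4
    {H : Type*} [NormedAddCommGroup H] [InnerProductSpace ℂ H] [CompleteSpace H]
    (T A A' : H →ₗ.[ℂ] H)
    (hT_dense : Dense (T.domain : Set H))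
    (hT_closed : IsClosed (T.graph : Set (H × H)))
    (hT_symm : ∀ u v : T.domain, ⟪T u, (v : H)⟫ = ⟪(u : H), T v⟫)
    (hTA : T ≤ A) (hA_sa : A.adjoint = A) (hA_le : A ≤ T.adjoint)
    (V : H →ₗ[ℂ] H)
    (hV_iso : ∀ y : H, InDef T Complex.I y → ‖V y‖ = ‖y‖)
    (hV_into : ∀ y : H, InDef T Complex.I y → InDef T (-Complex.I) (V y))
    (hA_dom : (A.domain : Set H) =
      {z | ∃ x ∈ T.domain, ∃ y, InDef T Complex.I y ∧ z = x + y - V y})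
    -- the boundary operators of the boundary triplet `(Ker(T* + i), Γ₀, Γ₁)`:
    (Γ0 Γ1 : H → H)
    (hΓ0 : ∀ zT zp zm : H, zT ∈ T.domain → InDef T Complex.I zp → InDef T (-Complex.I) zm →
      Γ0 (zT + zp + zm) = zm + V zp)
    (hΓ1 : ∀ zT zp zm : H, zT ∈ T.domain → InDef T Complex.I zp → InDef T (-Complex.I) zm →
      Γ1 (zT + zp + zm) = -(Complex.I • zm) + Complex.I • V zp)
    -- `B` is a bounded self-adjoint operator on `Ker(T* + i)`:
    (B : H →L[ℂ] H)
    (hB_maps : ∀ z : H, InDef T (-Complex.I) z → InDef T (-Complex.I) (B z))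
    (hB_sa : ∀ u v : H, InDef T (-Complex.I) u → InDef T (-Complex.I) v →
      ⟪B u, v⟫ = ⟪u, B v⟫)
    -- `A'` is the restriction of `T*` to `Ker(Γ₁ − B Γ₀)`:
    (hA'_le : A' ≤ T.adjoint)
    (hA'_dom : (A'.domain : Set H) =
      {z | ∃ _h : z ∈ T.adjoint.domain, Γ1 z = B (Γ0 z)})
    -- the Cayley transforms `U(A)`, `U(A')` and the operator `U(B)_H`:
    (UA UA' UBH : H →ₗ[ℂ] H)
    (hUA : ∀ w (hw : w ∈ A.domain),
      UA (A ⟨w, hw⟩ + Complex.I • w) = A ⟨w, hw⟩ - Complex.I • w)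
    (hUA' : ∀ w (hw : w ∈ A'.domain),
      UA' (A' ⟨w, hw⟩ + Complex.I • w) = A' ⟨w, hw⟩ - Complex.I • w)
    (hUBH_on : ∀ v : H, InDef T (-Complex.I) v →
      UBH (B v + Complex.I • v) = B v - Complex.I • v)
    (hUBH_perp : ∀ w : H, (∀ v : H, InDef T (-Complex.I) v → ⟪w, v⟫ = 0) → UBH w = w) :
    ∀ z : H, UA' z = UBH (UA z) := by
  intro z
  have hT_le_adj : T ≤ T.adjoint := le_trans hTA hA_le
  obtain ⟨x, y, hy, hz⟩ := StmtAux.s_surj hT_dense hT_closed hT_symm z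
  have hVy : InDef T (-Complex.I) (V y) := hV_into y hy
  obtain ⟨v, hv, hvv⟩ :=
    StmtAux.b_surj hT_dense B hB_maps hB_sa ((2 * Complex.I) • (V y)) (hVy.smul _)
  obtain ⟨hym, hyv⟩ := id hy
  obtain ⟨hVym, hVyv⟩ := id hVy
  have hxm : (x : H) ∈ T.adjoint.domain := hT_le_adj.1 x.2
  have hxv : T.adjoint ⟨(x : H), hxm⟩ = T x :=
    (hT_le_adj.2 (x := x) (y := ⟨(x : H), hxm⟩) rfl).symm
  have heval : ∀ (a b c : H) (ha : a ∈ T.adjoint.domain) (hb : b ∈ T.adjoint.domain)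
      (hc : c ∈ T.adjoint.domain) (h : a + b + c ∈ T.adjoint.domain),
      T.adjoint ⟨a + b + c, h⟩ =
        T.adjoint ⟨a, ha⟩ + T.adjoint ⟨b, hb⟩ + T.adjoint ⟨c, hc⟩ := by
    intro a b c ha hb hc h
    have h2 : (⟨a + b + c, h⟩ : T.adjoint.domain) = ⟨a, ha⟩ + ⟨b, hb⟩ + ⟨c, hc⟩ := rfl
    rw [h2, T.adjoint.map_add, T.adjoint.map_add]
  have heval_sub : ∀ (a b c : H) (ha : a ∈ T.adjoint.domain) (hb : b ∈ T.adjoint.domain)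
      (hc : c ∈ T.adjoint.domain) (h : a + b - c ∈ T.adjoint.domain),
      T.adjoint ⟨a + b - c, h⟩ =
        T.adjoint ⟨a, ha⟩ + T.adjoint ⟨b, hb⟩ - T.adjoint ⟨c, hc⟩ := by
    intro a b c ha hb hc h
    have h2 : (⟨a + b - c, h⟩ : T.adjoint.domain) = ⟨a, ha⟩ + ⟨b, hb⟩ - ⟨c, hc⟩ := rfl
    rw [h2, T.adjoint.map_sub, T.adjoint.map_add]
  -- Step 1 : compute `UA z`
  have hwA : (x : H) + y - V y ∈ A.domain := by
    have h3 : (x : H) + y - V y ∈ (A.domain : Set H) := by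
      rw [hA_dom]; exact ⟨x, x.2, y, hy, rfl⟩
    exact h3
  have hwT : (x : H) + y - V y ∈ T.adjoint.domain := hA_le.1 hwA
  have hAval : A ⟨(x : H) + y - V y, hwA⟩ = T x + Complex.I • y + Complex.I • (V y) := by
    have h1 : A ⟨(x : H) + y - V y, hwA⟩ = T.adjoint ⟨(x : H) + y - V y, hwT⟩ :=
      hA_le.2 rfl
    rw [h1, heval_sub _ _ _ hxm hym hVym hwT, hxv, hyv, hVyv]
    module
  have hzA : A ⟨(x : H) + y - V y, hwA⟩ + Complex.I • ((x : H) + y - V y) = z := by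
    rw [hAval, hz]; module
  have hUAz : UA z = T x - Complex.I • (x : H) + (2 * Complex.I) • (V y) := by
    rw [← hzA, hUA _ hwA, hAval]
    match_scalars <;> simp [Complex.ext_iff] <;> ring
  -- Step 2 : compute `UBH (UA z)`
  have hperp : UBH (T x - Complex.I • (x : H)) = T x - Complex.I • (x : H) := by
    apply hUBH_perp
    intro q hq
    obtain ⟨hqm, hqv⟩ := id hq
    have hf : ⟪T.adjoint ⟨q, hqm⟩, ((x : H))⟫ = ⟪q, T x⟫ :=
      LinearPMap.adjoint_isFormalAdjoint hT_dense ⟨q, hqm⟩ x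
    rw [hqv, inner_smul_left] at hf
    rw [inner_sub_left, inner_smul_left, Complex.conj_I]
    have h7 : ⟪T x, q⟫ = (starRingEnd ℂ) ⟪q, T x⟫ := (inner_conj_symm _ _).symm
    rw [h7, ← hf]
    simp [Complex.conj_I, inner_conj_symm]
  have hUBHz : UBH (UA z) = T x - Complex.I • (x : H) + (B v - Complex.I • v) := by
    rw [hUAz, ← hvv, map_add, hperp, hUBH_on v hv]
  -- Step 3 : compute `UA' z`
  have hzm : InDef T (-Complex.I) ((2⁻¹ : ℂ) • v + (2⁻¹ * Complex.I) • (B v)) :=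
    (hv.smul _).add ((hB_maps v hv).smul _)
  obtain ⟨hzmm, hzmv⟩ := id hzm
  have hVyeq : V y = (2⁻¹ : ℂ) • v - (2⁻¹ * Complex.I) • (B v) := by
    have h8 : (2 * Complex.I) • (V y) =
        (2 * Complex.I) • ((2⁻¹ : ℂ) • v - (2⁻¹ * Complex.I) • (B v)) := by
      rw [← hvv]
      match_scalars <;> simp [Complex.ext_iff] <;> ring
    exact smul_right_injective H (by simp [Complex.I_ne_zero]) h8
  have hΓ : Γ1 ((x : H) + y + ((2⁻¹ : ℂ) • v + (2⁻¹ * Complex.I) • (B v))) =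
      B (Γ0 ((x : H) + y + ((2⁻¹ : ℂ) • v + (2⁻¹ * Complex.I) • (B v)))) := by
    rw [hΓ0 _ _ _ x.2 hy hzm, hΓ1 _ _ _ x.2 hy hzm, hVyeq]
    simp only [map_add, map_sub, map_smul]
    match_scalars <;> simp [Complex.ext_iff] <;> ring
  have hw'T : (x : H) + y + ((2⁻¹ : ℂ) • v + (2⁻¹ * Complex.I) • (B v)) ∈ T.adjoint.domain :=
    add_mem (add_mem hxm hym) hzmm
  have hw'A' : (x : H) + y + ((2⁻¹ : ℂ) • v + (2⁻¹ * Complex.I) • (B v)) ∈ A'.domain := by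
    have h3 : (x : H) + y + ((2⁻¹ : ℂ) • v + (2⁻¹ * Complex.I) • (B v)) ∈
        (A'.domain : Set H) := by
      rw [hA'_dom]; exact ⟨hw'T, hΓ⟩
    exact h3
  have hA'val : A' ⟨_, hw'A'⟩ = T x + Complex.I • y +
      (-Complex.I) • ((2⁻¹ : ℂ) • v + (2⁻¹ * Complex.I) • (B v)) := by
    have h1 : A' ⟨_, hw'A'⟩ = T.adjoint ⟨_, hA'_le.1 hw'A'⟩ := hA'_le.2 rfl
    rw [h1, heval _ _ _ hxm hym hzmm _, hxv, hyv, hzmv]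
  have hzA' : A' ⟨_, hw'A'⟩ +
      Complex.I • ((x : H) + y + ((2⁻¹ : ℂ) • v + (2⁻¹ * Complex.I) • (B v))) = z := by
    rw [hA'val, hz]; module
  have hUA'z : UA' z = T x - Complex.I • (x : H) + (B v - Complex.I • v) := by
    rw [← hzA', hUA' _ hw'A', hA'val]
    match_scalars <;> simp [Complex.ext_iff] <;> ring
  rw [hUA'z, hUBHz]
end

section
/- In the setting of a Gelfand triple K ⊂ H ⊂ K', the operator Λ = √(ι ι*) extends by continuity to an isometric isomorphism Λ' : K' → H, the operator Λ maps H isometrically onto K, and Λ ∘ Λ' : K' → K equals the canonical isometric isomorphism I : K' → K obtained by extending ι* by continuity. -/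
open scoped ComplexInnerProductSpace

/-- Extension lemma: a continuous linear map `f` satisfying `‖f u‖ = ‖e u‖` for a dense-range
injective `e` extends to an isometry on the codomain of `e`. -/
lemma extend_isometry {H K' T : Type*}
    [NormedAddCommGroup H] [NormedSpace ℂ H]
    [NormedAddCommGroup K'] [NormedSpace ℂ K']
    [NormedAddCommGroup T] [NormedSpace ℂ T] [CompleteSpace T]
    (e : H →L[ℂ] K') (he_dense : DenseRange e) (he_inj : Function.Injective e)
    (f : H →L[ℂ] T) (hnorm : ∀ u, ‖f u‖ = ‖e u‖) :
    ∃ g : K' →L[ℂ] T, (∀ u, g (e u) = f u) ∧ Isometry g := by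
  set S : Submodule ℂ K' := LinearMap.range (e : H →ₗ[ℂ] K') with hS
  let φ : H ≃ₗ[ℂ] S := LinearEquiv.ofInjective (e : H →ₗ[ℂ] K') he_inj
  let f₀ : S →ₗ[ℂ] T := (f : H →ₗ[ℂ] T) ∘ₗ (φ.symm : S →ₗ[ℂ] H)
  have hφ : ∀ s : S, e (φ.symm s) = (s : K') := by
    intro s
    have := φ.apply_symm_apply s
    exact congrArg Subtype.val this
  have hf₀ : ∀ s : S, ‖f₀ s‖ = ‖s‖ := by
    intro s
    have h1 : ‖f (φ.symm s)‖ = ‖e (φ.symm s)‖ := hnorm _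
    simp only [f₀, LinearMap.coe_comp, Function.comp_apply, LinearEquiv.coe_coe,
      ContinuousLinearMap.coe_coe] at *
    rw [h1, hφ s]
    rfl
  let F : S →L[ℂ] T := f₀.mkContinuous 1 (fun s => by rw [hf₀, one_mul])
  have hSd : DenseRange (S.subtypeL : S →L[ℂ] K') := by
    have h1 : Set.range (e : H → K') ⊆ Set.range (S.subtypeL : S → K') := by
      rintro x ⟨u, rfl⟩
      exact ⟨⟨e u, ⟨u, rfl⟩⟩, rfl⟩
    intro x
    exact closure_mono h1 (he_dense x)
  have hSu : IsUniformInducing (S.subtypeL : S →L[ℂ] K') :=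
    isometry_subtype_coe.isUniformInducing
  refine ⟨F.extend S.subtypeL, ?_, ?_⟩
  · intro u
    have hu : e u = S.subtypeL ⟨e u, ⟨u, rfl⟩⟩ := rfl
    rw [hu, ContinuousLinearMap.extend_eq _ hSd hSu]
    show f₀ _ = f u
    simp only [f₀, LinearMap.coe_comp, Function.comp_apply, LinearEquiv.coe_coe,
      ContinuousLinearMap.coe_coe]
    congr 1
    apply he_inj
    exact hφ ⟨e u, ⟨u, rfl⟩⟩
  · set g := F.extend S.subtypeL
    have hnormg : ∀ x : K', ‖g x‖ = ‖x‖ := by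
      intro x
      have hcl : IsClosed {x : K' | ‖g x‖ = ‖x‖} :=
        isClosed_eq (continuous_norm.comp g.continuous) continuous_norm
      refine hSd.induction_on x hcl ?_
      intro s
      rw [ContinuousLinearMap.extend_eq _ hSd hSu]
      show ‖f₀ s‖ = ‖(s : K')‖
      rw [hf₀]
      rfl
    exact AddMonoidHomClass.isometry_of_norm g hnormg

lemma denseRange_of_ortho {F E : Type*}
    [NormedAddCommGroup F] [InnerProductSpace ℂ F]
    [NormedAddCommGroup E] [InnerProductSpace ℂ E] [CompleteSpace E]
    (T : F →L[ℂ] E)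
    (h : ∀ x : E, (∀ u : F, ⟪T u, x⟫ = (0:ℂ)) → x = 0) : DenseRange T := by
  have htop : (LinearMap.range (T : F →ₗ[ℂ] E)).topologicalClosure = ⊤ := by
    rw [Submodule.topologicalClosure_eq_top_iff, Submodule.eq_bot_iff]
    intro x hx
    refine h x fun u => ?_
    exact hx (T u) ⟨u, rfl⟩
  have : Dense ((LinearMap.range (T : F →ₗ[ℂ] E) : Submodule ℂ E) : Set E) :=
    Submodule.dense_iff_topologicalClosure_eq_top.mpr htop
  exact this

lemma hnorm_eq {X Y : Type*} [NormedAddCommGroup X] [InnerProductSpace ℂ X]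
    [NormedAddCommGroup Y] [InnerProductSpace ℂ Y] (x : X) (y : Y)
    (h : ⟪x, x⟫ = ⟪y, y⟫) : ‖x‖ = ‖y‖ := by
  rw [inner_self_eq_norm_sq_to_K, inner_self_eq_norm_sq_to_K] at h
  norm_cast at h
  have h1 : (0:ℝ) ≤ ‖x‖ := norm_nonneg _
  have h2 : (0:ℝ) ≤ ‖y‖ := norm_nonneg _
  nlinarith

lemma surj_of_isometry {X Y : Type*}
    [NormedAddCommGroup X] [NormedSpace ℂ X] [CompleteSpace X]
    [NormedAddCommGroup Y] [NormedSpace ℂ Y]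
    (g : X →L[ℂ] Y) (hg : Isometry g) {D : Set Y} (hD : Dense D)
    (hsub : D ⊆ Set.range g) : Function.Surjective g := by
  have hclosed : IsClosed (Set.range g) := hg.isClosedEmbedding.isClosed_range
  have h1 : closure D ⊆ closure (Set.range g) := closure_mono hsub
  rw [hD.closure_eq, hclosed.closure_eq] at h1
  exact fun y => h1 (Set.mem_univ y)

/-- In the setting of a Gelfand triple `K ⊂ H ⊂ K'` (here `K'` is modelled as an
abstract Hilbert space together with the embedding `e : H → K'` with dense image and
`⟪e u, e v⟫_{K'} = ⟪ι* u, ι* v⟫_K`), the operator `Λ = √(ι ι*)` extends by continuity to an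
isometric isomorphism `Λ' : K' → H`, the operator `Λ` maps `H` isometrically onto `K`, and
`Λ ∘ Λ'` equals the canonical isometric isomorphism `I : K' → K` obtained by extending `ι*`
by continuity. -/
theorem stmt_6
    {K H K' : Type*}
    [NormedAddCommGroup K] [InnerProductSpace ℂ K] [CompleteSpace K]
    [NormedAddCommGroup H] [InnerProductSpace ℂ H] [CompleteSpace H]
    [NormedAddCommGroup K'] [InnerProductSpace ℂ K'] [CompleteSpace K']
    (ι : K →L[ℂ] H) (hι_inj : Function.Injective ι) (hι_dense : DenseRange ι)
    (e : H →L[ℂ] K') (he_dense : DenseRange e)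
    (he_inner : ∀ u v : H, ⟪e u, e v⟫ =
      ⟪(ContinuousLinearMap.adjoint ι) u, (ContinuousLinearMap.adjoint ι) v⟫)
    (Λ : H →L[ℂ] H) (hΛ_pos : Λ.IsPositive)
    (hΛ_sq : Λ.comp Λ = ι.comp (ContinuousLinearMap.adjoint ι)) :
    (∃ Λ' : K' →L[ℂ] H, (∀ u : H, Λ' (e u) = Λ u) ∧
        Isometry Λ' ∧ Function.Surjective Λ') ∧
    (∃ ΛK : H →L[ℂ] K, (∀ u : H, ι (ΛK u) = Λ u) ∧
        Isometry ΛK ∧ Function.Surjective ΛK) ∧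
    (∃ I : K' →L[ℂ] K, (∀ u : H, I (e u) = (ContinuousLinearMap.adjoint ι) u) ∧
        Isometry I ∧ Function.Surjective I ∧
        ∀ Λ' : K' →L[ℂ] H, (∀ u : H, Λ' (e u) = Λ u) →
          ∀ y : K', Λ (Λ' y) = ι (I y)) := by
  classical
  set A := ContinuousLinearMap.adjoint ι with hA
  have hsa : ContinuousLinearMap.adjoint Λ = Λ := hΛ_pos.isSelfAdjoint.adjoint_eq
  have hsq : ∀ u : H, Λ (Λ u) = ι (A u) := fun u =>
    congrFun (congrArg (fun (T : H →L[ℂ] H) => (T : H → H)) hΛ_sq) u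
  have hΛA : ∀ u : H, ‖Λ u‖ = ‖A u‖ := by
    intro u
    apply hnorm_eq
    calc ⟪Λ u, Λ u⟫ = ⟪ContinuousLinearMap.adjoint Λ u, Λ u⟫ := by rw [hsa]
      _ = ⟪u, Λ (Λ u)⟫ := ContinuousLinearMap.adjoint_inner_left Λ _ _
      _ = ⟪u, ι (A u)⟫ := by rw [hsq]
      _ = ⟪A u, A u⟫ := (ContinuousLinearMap.adjoint_inner_left ι _ _).symm
  have hAe : ∀ u : H, ‖A u‖ = ‖e u‖ := fun u => (hnorm_eq (e u) (A u) (he_inner u u)).symm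
  have hΛe : ∀ u : H, ‖Λ u‖ = ‖e u‖ := fun u => (hΛA u).trans (hAe u)
  -- A = ι* is injective
  have hA_inj : Function.Injective A := by
    intro u v huv
    rw [← sub_eq_zero, ← map_sub] at huv
    rw [← sub_eq_zero]
    set w := u - v with hww
    have hk : ∀ k : K, ⟪ι k, w⟫ = (0:ℂ) := by
      intro k
      rw [← ContinuousLinearMap.adjoint_inner_right, ← hA, huv, inner_zero_right]
    have hw : ∀ x : H, ⟪x, w⟫ = (0:ℂ) := by
      intro x
      refine hι_dense.induction_on x ?_ hk
      exact isClosed_eq (Continuous.inner continuous_id continuous_const) continuous_const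
    have := hw w
    rwa [inner_self_eq_zero] at this
  have hΛ_inj : Function.Injective Λ := by
    intro u v huv
    apply hA_inj
    rw [← sub_eq_zero, ← map_sub, ← norm_eq_zero, ← hΛA, map_sub, huv, sub_self, norm_zero]
  have he_inj : Function.Injective e := by
    intro u v huv
    apply hA_inj
    rw [← sub_eq_zero, ← map_sub, ← norm_eq_zero, hAe, map_sub, huv, sub_self, norm_zero]
  -- dense ranges
  have hΛ_dense : DenseRange Λ := by
    refine denseRange_of_ortho Λ fun x hx => ?_
    apply hΛ_inj
    rw [map_zero, ← inner_self_eq_zero (𝕜 := ℂ) (x := Λ x)]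
    calc ⟪Λ x, Λ x⟫ = ⟪ContinuousLinearMap.adjoint Λ x, Λ x⟫ := by rw [hsa]
      _ = ⟪x, Λ (Λ x)⟫ := ContinuousLinearMap.adjoint_inner_left Λ _ _
      _ = (starRingEnd ℂ) ⟪Λ (Λ x), x⟫ := (inner_conj_symm _ _).symm
      _ = 0 := by rw [hx (Λ x), map_zero]
  have hA_dense : DenseRange A := by
    refine denseRange_of_ortho A fun x hx => ?_
    apply hι_inj
    rw [map_zero, ← inner_self_eq_zero (𝕜 := ℂ) (x := ι x)]
    calc ⟪ι x, ι x⟫ = ⟪A (ι x), x⟫ := by rw [hA, ContinuousLinearMap.adjoint_inner_left]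
      _ = (starRingEnd ℂ) ⟪x, A (ι x)⟫ := (inner_conj_symm _ _).symm
      _ = 0 := by
          rw [← inner_conj_symm, hx (ι x), map_zero, map_zero]
  -- Part 1 : Λ'
  obtain ⟨Λ', hΛ'e, hΛ'iso⟩ := extend_isometry e he_dense he_inj Λ hΛe
  have hΛ'surj : Function.Surjective Λ' := by
    refine surj_of_isometry Λ' hΛ'iso (D := Set.range Λ) hΛ_dense ?_
    rintro y ⟨u, rfl⟩
    exact ⟨e u, hΛ'e u⟩
  -- Part 2 : ΛK
  obtain ⟨V, hVΛ, hViso⟩ := extend_isometry Λ hΛ_dense hΛ_inj A (fun u => (hΛA u).symm)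
  have hVsurj : Function.Surjective V := by
    refine surj_of_isometry V hViso hA_dense ?_
    rintro y ⟨u, rfl⟩
    exact ⟨Λ u, hVΛ u⟩
  have hιV : ∀ u : H, ι (V u) = Λ u := by
    intro u
    refine hΛ_dense.induction_on u ?_ ?_
    · exact isClosed_eq (ι.continuous.comp V.continuous) Λ.continuous
    · intro w
      rw [hVΛ w, hsq w]
  -- Part 3 : I
  obtain ⟨I, hIe, hIiso⟩ := extend_isometry e he_dense he_inj A hAe
  have hIsurj : Function.Surjective I := by
    refine surj_of_isometry I hIiso hA_dense ?_
    rintro y ⟨u, rfl⟩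
    exact ⟨e u, hIe u⟩
  refine ⟨⟨Λ', hΛ'e, hΛ'iso, hΛ'surj⟩, ⟨V, hιV, hViso, hVsurj⟩,
    ⟨I, hIe, hIiso, hIsurj, ?_⟩⟩
  intro L hL y
  refine he_dense.induction_on y ?_ ?_
  · exact isClosed_eq (Λ.continuous.comp L.continuous) (ι.continuous.comp I.continuous)
  · intro u
    rw [hL u, hIe u, hsq u]
end

section
/- In the Gelfand triple K ⊂ H ⊂ K', the operators Λ : H → K and Λ' : K' → H are adjoint to each other, i.e., (Λ' y)(u) = y(Λ u) for all y ∈ K' and u ∈ H, where elements of H are identified with anti-linear functionals via the inner product. -/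
open scoped ComplexInnerProductSpace

/-- In the Gelfand triple `K ⊂ H ⊂ K'`, the operators `Λ : H → K` and
`Λ' : K' → H` are adjoint to each other: `(Λ' y)(u) = y(Λ u)` for all `y ∈ K'` and `u ∈ H`,
where elements of `H` are identified with anti-linear functionals via the inner product.
Concretely, with the pairing `p y x = y(x)` (which agrees with the `H`-inner product on
`H × K`), and `Λ u` viewed in `K` via a witness `k` with `ι k = Λ u`, one has
`⟪Λ' y, u⟫_H = p y k`. -/
theorem stmt_8
    {K H K' : Type*}
    [NormedAddCommGroup K] [InnerProductSpace ℂ K] [CompleteSpace K]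
    [NormedAddCommGroup H] [InnerProductSpace ℂ H] [CompleteSpace H]
    [NormedAddCommGroup K'] [InnerProductSpace ℂ K'] [CompleteSpace K']
    (ι : K →L[ℂ] H) (hι_inj : Function.Injective ι) (hι_dense : DenseRange ι)
    (e : H →L[ℂ] K') (he_dense : DenseRange e)
    (he_inner : ∀ u v : H, ⟪e u, e v⟫ =
      ⟪(ContinuousLinearMap.adjoint ι) u, (ContinuousLinearMap.adjoint ι) v⟫)
    (p : K' → K → ℂ)
    (hp_cont : ∀ x : K, Continuous fun y : K' => p y x)
    (hp_H : ∀ (u : H) (x : K), p (e u) x = ⟪u, ι x⟫)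
    (Λ : H →L[ℂ] H) (hΛ_pos : Λ.IsPositive)
    (hΛ_sq : Λ.comp Λ = ι.comp (ContinuousLinearMap.adjoint ι))
    (Λ' : K' →L[ℂ] H) (hΛ'_ext : ∀ u : H, Λ' (e u) = Λ u) :
    ∀ (y : K') (u : H) (k : K), ι k = Λ u → ⟪Λ' y, u⟫ = p y k := by
  intro y u k hk
  have key : ∀ y : K', ⟪Λ' y, u⟫ = p y k := by
    have hcont1 : Continuous fun y : K' => ⟪Λ' y, u⟫ :=
      Continuous.inner (Λ'.continuous) continuous_const
    have heq := Continuous.ext_on he_dense hcont1 (hp_cont k) ?_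
    · exact fun y => congrFun heq y
    rintro _ ⟨v, rfl⟩
    simp only []
    rw [hΛ'_ext, hp_H, hk, ← hΛ_pos.isSelfAdjoint.adjoint_eq, ContinuousLinearMap.adjoint_inner_left, hΛ_pos.isSelfAdjoint.adjoint_eq]
  exact key y
end

section
/- Assume the abstract boundary-problem setup: H₁ ⊂ D(T*) is dense in D(T*) (graph topology), γ₀, γ₁ : H₁ → K are bounded with γ₀ ⊕ γ₁ surjective onto K ⊕ K admitting a bounded section, Ker(γ₀ ⊕ γ₁) = D(T), the Lagrange identity ⟨T*u, v⟩ − ⟨u, T*v⟩ = ⟨γ₁u, γ₀v⟩_∂ − ⟨γ₀u, γ₁v⟩_∂ holds on H₁, and Γ₀ : D(T*) → K' is the continuous extension of γ₀. If A = T*|Ker γ₀ is self-adjoint, then Ker Γ₀ = Ker γ₀; in particular Ker Γ₀ ⊂ H₁. -/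
open scoped ComplexInnerProductSpace

/-- In the abstract boundary-problem setup, with `Γ₀ : D(T*) → K'` the
continuous extension of `γ₀` (and the extended Lagrange identity available), if
`A = T*|Ker γ₀` is self-adjoint, then `Ker Γ₀ = Ker γ₀`; in particular `Ker Γ₀ ⊂ H₁`. -/
theorem stmt_11
    {H0 H1 Kb KK K' : Type*}
    [NormedAddCommGroup H0] [InnerProductSpace ℂ H0] [CompleteSpace H0]
    [NormedAddCommGroup H1] [InnerProductSpace ℂ H1] [CompleteSpace H1]
    [NormedAddCommGroup Kb] [InnerProductSpace ℂ Kb] [CompleteSpace Kb]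
    [NormedAddCommGroup KK] [InnerProductSpace ℂ KK] [CompleteSpace KK]
    [NormedAddCommGroup K'] [InnerProductSpace ℂ K'] [CompleteSpace K']
    (T : H0 →ₗ.[ℂ] H0)
    (hT_dense : Dense (T.domain : Set H0))
    (hT_closed : IsClosed (T.graph : Set (H0 × H0)))
    (hT_symm : ∀ u v : T.domain, ⟪T u, (v : H0)⟫ = ⟪(u : H0), T v⟫)
    (ιH : H1 →L[ℂ] H0) (hιH_inj : Function.Injective ιH) (hιH_dense : DenseRange ιH)
    (ιK : KK →L[ℂ] Kb) (hιK_inj : Function.Injective ιK) (hιK_dense : DenseRange ιK)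
    (eK : Kb →L[ℂ] K') (heK_inj : Function.Injective eK) (heK_dense : DenseRange eK)
    (heK_inner : ∀ u v : Kb, ⟪eK u, eK v⟫ =
      ⟪(ContinuousLinearMap.adjoint ιK) u, (ContinuousLinearMap.adjoint ιK) v⟫)
    (hH1_sub : ∀ x : H1, ιH x ∈ T.adjoint.domain)
    (hH1_graphdense : ∀ u : T.adjoint.domain, ∀ ε > (0 : ℝ), ∃ x : H1,
        ‖(u : H0) - ιH x‖ + ‖T.adjoint u - T.adjoint ⟨ιH x, hH1_sub x⟩‖ < ε)
    (hT_bdd : ∃ C : ℝ, ∀ x : H1, ‖T.adjoint ⟨ιH x, hH1_sub x⟩‖ ≤ C * ‖x‖)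
    (γ0 γ1 : H1 →L[ℂ] KK)
    (κ : (KK × KK) →L[ℂ] H1)
    (hκ : ∀ ab : KK × KK, γ0 (κ ab) = ab.1 ∧ γ1 (κ ab) = ab.2)
    (hker : ∀ x : H1, (γ0 x = 0 ∧ γ1 x = 0) ↔ ιH x ∈ T.domain)
    (hLagrange : ∀ u v : H1,
        ⟪T.adjoint ⟨ιH u, hH1_sub u⟩, ιH v⟫ - ⟪ιH u, T.adjoint ⟨ιH v, hH1_sub v⟩⟫
          = ⟪ιK (γ1 u), ιK (γ0 v)⟫ - ⟪ιK (γ0 u), ιK (γ1 v)⟫)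
    (p : K' → KK → ℂ)
    (hp_cont : ∀ x : KK, Continuous fun y : K' => p y x)
    (hp_compat : ∀ (w : Kb) (x : KK), p (eK w) x = ⟪w, ιK x⟫)
    (Γ0 Γ1 : T.adjoint.domain →ₗ[ℂ] K')
    (hΓ0_ext : ∀ x : H1, Γ0 ⟨ιH x, hH1_sub x⟩ = eK (ιK (γ0 x)))
    (hΓ1_ext : ∀ x : H1, Γ1 ⟨ιH x, hH1_sub x⟩ = eK (ιK (γ1 x)))
    (hΓ_bdd : ∃ C > (0 : ℝ), ∀ u : T.adjoint.domain,
        ‖Γ0 u‖ + ‖Γ1 u‖ ≤ C * (‖(u : H0)‖ + ‖T.adjoint u‖))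
    (hLagrange_ext : ∀ (u : T.adjoint.domain) (v : H1),
        ⟪T.adjoint u, ιH v⟫ - ⟪(u : H0), T.adjoint ⟨ιH v, hH1_sub v⟩⟫
          = p (Γ1 u) (γ0 v) - p (Γ0 u) (γ1 v))
    (A : H0 →ₗ.[ℂ] H0) (hA_le : A ≤ T.adjoint) (hA_sa : A.adjoint = A)
    (hA_dom : (A.domain : Set H0) = ιH '' {x : H1 | γ0 x = 0})
    :
    ∀ u : T.adjoint.domain,
      Γ0 u = 0 ↔ ∃ x : H1, γ0 x = 0 ∧ ιH x = (u : H0) := by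
  intro u
  constructor
  · -- forward direction: Γ0 u = 0 → u ∈ ιH '' ker γ0
    intro hΓ0u
    -- key: p (Γ1 u) 0 = 0 by density
    have hp0' : ∀ z : KK, p 0 z = 0 := by
      intro z
      rw [← map_zero eK, hp_compat]
      simp
    have hp0 : ∀ y : K', p y 0 = 0 := by
      intro y
      have : (fun y : K' => p y 0) = fun _ => (0 : ℂ) := by
        apply DenseRange.equalizer heK_dense (hp_cont 0) continuous_const
        funext w
        simp [hp_compat]
      exact congrFun this y
    -- u.val belongs to the adjoint domain of A
    have hmem : (u : H0) ∈ A.adjoint.domain := by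
      apply LinearPMap.mem_adjoint_domain_of_exists
      refine ⟨T.adjoint u, ?_⟩
      intro v
      obtain ⟨x, hx0, hxv⟩ : ∃ x : H1, γ0 x = 0 ∧ ιH x = (v : H0) := by
        have hv : (v : H0) ∈ (A.domain : Set H0) := v.2
        rw [hA_dom] at hv
        obtain ⟨x, hx, hxe⟩ := hv
        exact ⟨x, hx, hxe⟩
      have hAv : A v = T.adjoint ⟨ιH x, hH1_sub x⟩ :=
        hA_le.2 (x := v) (y := ⟨ιH x, hH1_sub x⟩) hxv.symm
      have hL := hLagrange_ext u x
      rw [hΓ0u, hx0, hp0, hp0', sub_zero] at hL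
      have : ⟪T.adjoint u, ιH x⟫ = ⟪(u : H0), T.adjoint ⟨ιH x, hH1_sub x⟩⟫ :=
        sub_eq_zero.mp hL
      rw [hAv, ← this, hxv]
    rw [hA_sa] at hmem
    have hmem' : (u : H0) ∈ (A.domain : Set H0) := hmem
    rw [hA_dom] at hmem'
    obtain ⟨x, hx, hxe⟩ := hmem'
    exact ⟨x, hx, hxe⟩
  · rintro ⟨x, hx0, hxu⟩
    have : u = ⟨ιH x, hH1_sub x⟩ := Subtype.ext hxu.symm
    rw [this, hΓ0_ext, hx0]
    simp
end

section
/- In the abstract boundary-problem setup, the boundary operators γ₀, γ₁ : H₁ → K extend by continuity to bounded operators Γ₀, Γ₁ : D(T*) → K' (with the graph topology on D(T*)), such that ⟨T*u, v⟩ − ⟨u, T*v⟩ = ⟨Γ₁u, Γ₀v⟩_{K',K} − ⟨Γ₀u, Γ₁v⟩_{K',K} holds for all u ∈ D(T*) and v ∈ H₁. -/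
open scoped ComplexInnerProductSpace

set_option maxHeartbeats 1000000

/-- In the abstract boundary-problem setup (Gelfand triple `K ⊂ K^∂ ⊂ K'`,
`T` closed densely defined symmetric in `H₀`, `H₁ ⊂ D(T*)` dense in the graph topology with
`T*|H₁` bounded, bounded boundary operators `γ₀, γ₁ : H₁ → K` with `γ₀ ⊕ γ₁` surjective onto
`K ⊕ K` with a bounded section, `Ker(γ₀ ⊕ γ₁) = D(T)`, and the Lagrange identity on `H₁`),
the boundary operators extend by continuity to bounded operators `Γ₀, Γ₁ : D(T*) → K'`
such that `⟪T*u, v⟫ − ⟪u, T*v⟫ = ⟨Γ₁u, Γ₀v⟩_{K',K} − ⟨Γ₀u, Γ₁v⟩_{K',K}` for all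
`u ∈ D(T*)`, `v ∈ H₁`.  Here `Kb` plays the role of `K^∂`, `KK` of `K`, and
`p : K' → K → ℂ` is the canonical pairing, extending the `K^∂` inner product. -/
theorem stmt_12
    {H0 H1 Kb KK K' : Type*}
    [NormedAddCommGroup H0] [InnerProductSpace ℂ H0] [CompleteSpace H0]
    [NormedAddCommGroup H1] [InnerProductSpace ℂ H1] [CompleteSpace H1]
    [NormedAddCommGroup Kb] [InnerProductSpace ℂ Kb] [CompleteSpace Kb]
    [NormedAddCommGroup KK] [InnerProductSpace ℂ KK] [CompleteSpace KK]
    [NormedAddCommGroup K'] [InnerProductSpace ℂ K'] [CompleteSpace K']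
    (T : H0 →ₗ.[ℂ] H0)
    (hT_dense : Dense (T.domain : Set H0))
    (hT_closed : IsClosed (T.graph : Set (H0 × H0)))
    (hT_symm : ∀ u v : T.domain, ⟪T u, (v : H0)⟫ = ⟪(u : H0), T v⟫)
    (ιH : H1 →L[ℂ] H0) (hιH_inj : Function.Injective ιH) (hιH_dense : DenseRange ιH)
    (ιK : KK →L[ℂ] Kb) (hιK_inj : Function.Injective ιK) (hιK_dense : DenseRange ιK)
    (eK : Kb →L[ℂ] K') (heK_inj : Function.Injective eK) (heK_dense : DenseRange eK)
    (heK_inner : ∀ u v : Kb, ⟪eK u, eK v⟫ =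
      ⟪(ContinuousLinearMap.adjoint ιK) u, (ContinuousLinearMap.adjoint ιK) v⟫)
    (hH1_sub : ∀ x : H1, ιH x ∈ T.adjoint.domain)
    (hH1_graphdense : ∀ u : T.adjoint.domain, ∀ ε > (0 : ℝ), ∃ x : H1,
        ‖(u : H0) - ιH x‖ + ‖T.adjoint u - T.adjoint ⟨ιH x, hH1_sub x⟩‖ < ε)
    (hT_bdd : ∃ C : ℝ, ∀ x : H1, ‖T.adjoint ⟨ιH x, hH1_sub x⟩‖ ≤ C * ‖x‖)
    (γ0 γ1 : H1 →L[ℂ] KK)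
    (κ : (KK × KK) →L[ℂ] H1)
    (hκ : ∀ ab : KK × KK, γ0 (κ ab) = ab.1 ∧ γ1 (κ ab) = ab.2)
    (hker : ∀ x : H1, (γ0 x = 0 ∧ γ1 x = 0) ↔ ιH x ∈ T.domain)
    (hLagrange : ∀ u v : H1,
        ⟪T.adjoint ⟨ιH u, hH1_sub u⟩, ιH v⟫ - ⟪ιH u, T.adjoint ⟨ιH v, hH1_sub v⟩⟫
          = ⟪ιK (γ1 u), ιK (γ0 v)⟫ - ⟪ιK (γ0 u), ιK (γ1 v)⟫)
    (p : K' → KK → ℂ)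
    (hp_cont : ∀ x : KK, Continuous fun y : K' => p y x)
    (hp_compat : ∀ (w : Kb) (x : KK), p (eK w) x = ⟪w, ιK x⟫) :
    ∃ Γ0 Γ1 : T.adjoint.domain →ₗ[ℂ] K',
      (∀ x : H1, Γ0 ⟨ιH x, hH1_sub x⟩ = eK (ιK (γ0 x))) ∧
      (∀ x : H1, Γ1 ⟨ιH x, hH1_sub x⟩ = eK (ιK (γ1 x))) ∧
      (∃ C > (0 : ℝ), ∀ u : T.adjoint.domain,
          ‖Γ0 u‖ + ‖Γ1 u‖ ≤ C * (‖(u : H0)‖ + ‖T.adjoint u‖)) ∧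
      (∀ (u : T.adjoint.domain) (v : H1),
          ⟪T.adjoint u, ιH v⟫ - ⟪(u : H0), T.adjoint ⟨ιH v, hH1_sub v⟩⟫
            = p (Γ1 u) (γ0 v) - p (Γ0 u) (γ1 v)) := by
  classical
  obtain ⟨C, hC⟩ := hT_bdd
  set C' : ℝ := max C 0 with hC'def
  have hC'nn : (0:ℝ) ≤ C' := le_max_right _ _
  have hC' : ∀ x : H1, ‖T.adjoint ⟨ιH x, hH1_sub x⟩‖ ≤ C' * ‖x‖ := fun x =>
    (hC x).trans (mul_le_mul_of_nonneg_right (le_max_left _ _) (norm_nonneg _))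
  set M : ℝ := ‖κ‖ * (‖ιH‖ + C') with hMdef
  have hMnn : (0:ℝ) ≤ M := mul_nonneg (ContinuousLinearMap.opNorm_nonneg κ)
    (add_nonneg (ContinuousLinearMap.opNorm_nonneg ιH) hC'nn)
  -- generic bound on the Lagrange bracket
  have genbd : ∀ (x : H1) (ab : KK × KK),
      ‖(⟪T.adjoint ⟨ιH x, hH1_sub x⟩, ιH (κ ab)⟫ : ℂ)
        - ⟪ιH x, T.adjoint ⟨ιH (κ ab), hH1_sub (κ ab)⟩⟫‖
        ≤ M * ((‖ιH x‖ + ‖T.adjoint ⟨ιH x, hH1_sub x⟩‖) * ‖ab‖) := by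
    intro x ab
    have hκn : ‖κ ab‖ ≤ ‖κ‖ * ‖ab‖ := κ.le_opNorm ab
    have h1 : ‖(⟪T.adjoint ⟨ιH x, hH1_sub x⟩, ιH (κ ab)⟫ : ℂ)‖
        ≤ ‖T.adjoint ⟨ιH x, hH1_sub x⟩‖ * (‖ιH‖ * (‖κ‖ * ‖ab‖)) := by
      refine (norm_inner_le_norm _ _).trans ?_
      have h0 : ‖ιH (κ ab)‖ ≤ ‖ιH‖ * (‖κ‖ * ‖ab‖) :=
        (ιH.le_opNorm _).trans (mul_le_mul_of_nonneg_left hκn (norm_nonneg _))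
      exact mul_le_mul_of_nonneg_left h0 (norm_nonneg _)
    have h2 : ‖(⟪ιH x, T.adjoint ⟨ιH (κ ab), hH1_sub (κ ab)⟩⟫ : ℂ)‖
        ≤ ‖ιH x‖ * (C' * (‖κ‖ * ‖ab‖)) := by
      refine (norm_inner_le_norm _ _).trans ?_
      have h0 : ‖T.adjoint ⟨ιH (κ ab), hH1_sub (κ ab)⟩‖ ≤ C' * (‖κ‖ * ‖ab‖) :=
        (hC' (κ ab)).trans (mul_le_mul_of_nonneg_left hκn hC'nn)
      exact mul_le_mul_of_nonneg_left h0 (norm_nonneg _)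
    have h3 := norm_sub_le (⟪T.adjoint ⟨ιH x, hH1_sub x⟩, ιH (κ ab)⟫ : ℂ)
      (⟪ιH x, T.adjoint ⟨ιH (κ ab), hH1_sub (κ ab)⟩⟫ : ℂ)
    have hx1 : (0:ℝ) ≤ ‖ιH x‖ := norm_nonneg _
    have hx2 : (0:ℝ) ≤ ‖T.adjoint ⟨ιH x, hH1_sub x⟩‖ := norm_nonneg _
    have hab : (0:ℝ) ≤ ‖ab‖ := norm_nonneg _
    have hι : (0:ℝ) ≤ ‖ιH‖ := ContinuousLinearMap.opNorm_nonneg _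
    have hκ0 : (0:ℝ) ≤ ‖κ‖ := ContinuousLinearMap.opNorm_nonneg _
    rw [hMdef]
    nlinarith [mul_nonneg (mul_nonneg hκ0 hι) (mul_nonneg hx1 hab),
      mul_nonneg (mul_nonneg hκ0 hC'nn) (mul_nonneg hx2 hab)]
  -- the two pairing identities coming from the Lagrange identity
  have pair0 : ∀ (x : H1) (b : KK), (⟪ιK (γ0 x), ιK b⟫ : ℂ)
      = ⟪ιH x, T.adjoint ⟨ιH (κ (0, b)), hH1_sub (κ (0, b))⟩⟫
        - ⟪T.adjoint ⟨ιH x, hH1_sub x⟩, ιH (κ (0, b))⟫ := by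
    intro x b
    have h := hLagrange x (κ (0, b))
    rw [(hκ (0, b)).1, (hκ (0, b)).2] at h
    simp only [map_zero, inner_zero_right, zero_sub] at h
    linear_combination h
  have pair1 : ∀ (x : H1) (b : KK), (⟪ιK (γ1 x), ιK b⟫ : ℂ)
      = ⟪T.adjoint ⟨ιH x, hH1_sub x⟩, ιH (κ (b, 0))⟫
        - ⟪ιH x, T.adjoint ⟨ιH (κ (b, 0)), hH1_sub (κ (b, 0))⟩⟫ := by
    intro x b
    have h := hLagrange x (κ (b, 0))
    rw [(hκ (b, 0)).1, (hκ (b, 0)).2] at h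
    simp only [map_zero, inner_zero_right, sub_zero] at h
    linear_combination -h
  -- abstract estimate through the adjoint of ιK
  have estbd : ∀ (w : Kb) (s : ℝ), 0 ≤ s →
      (∀ b : KK, ‖(⟪w, ιK b⟫ : ℂ)‖ ≤ M * (s * ‖b‖)) → ‖eK w‖ ≤ M * s := by
    intro w s hs hb
    set A := ContinuousLinearMap.adjoint ιK with hA
    have hsq : ‖eK w‖ ^ 2 = ‖A w‖ ^ 2 := by
      have h2 := heK_inner w w
      rw [inner_self_eq_norm_sq_to_K, inner_self_eq_norm_sq_to_K] at h2
      exact_mod_cast h2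
    have h4 : (⟪A w, A w⟫ : ℂ) = ⟪w, ιK (A w)⟫ :=
      ContinuousLinearMap.adjoint_inner_left ιK (A w) w
    have h5 : ‖A w‖ ^ 2 ≤ M * (s * ‖A w‖) := by
      have h6 : ‖(⟪A w, A w⟫ : ℂ)‖ = ‖A w‖ ^ 2 := by
        rw [inner_self_eq_norm_sq_to_K, norm_pow, RCLike.norm_ofReal, abs_norm]
      calc ‖A w‖ ^ 2 = ‖(⟪A w, A w⟫ : ℂ)‖ := h6.symm
        _ = ‖(⟪w, ιK (A w)⟫ : ℂ)‖ := by rw [h4]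
        _ ≤ M * (s * ‖A w‖) := hb (A w)
    have h7 : ‖eK w‖ = ‖A w‖ := by
      have h8 := congrArg Real.sqrt hsq
      rwa [Real.sqrt_sq (norm_nonneg _), Real.sqrt_sq (norm_nonneg _)] at h8
    rw [h7]
    nlinarith [norm_nonneg (A w), mul_nonneg hMnn hs]
  -- the two norm estimates in the graph norm
  have est0 : ∀ x : H1, ‖eK (ιK (γ0 x))‖
      ≤ M * (‖ιH x‖ + ‖T.adjoint ⟨ιH x, hH1_sub x⟩‖) := by
    intro x
    refine estbd _ _ (by positivity) ?_
    intro b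
    have hnb : ‖((0 : KK), b)‖ = ‖b‖ := by
      simp only [Prod.norm_def, norm_zero]
      exact max_eq_right (norm_nonneg b)
    rw [pair0 x b, norm_sub_rev]
    calc ‖(⟪T.adjoint ⟨ιH x, hH1_sub x⟩, ιH (κ (0, b))⟫ : ℂ)
          - ⟪ιH x, T.adjoint ⟨ιH (κ (0, b)), hH1_sub (κ (0, b))⟩⟫‖
        ≤ M * ((‖ιH x‖ + ‖T.adjoint ⟨ιH x, hH1_sub x⟩‖) * ‖((0 : KK), b)‖) := genbd x (0, b)
      _ = M * ((‖ιH x‖ + ‖T.adjoint ⟨ιH x, hH1_sub x⟩‖) * ‖b‖) := by rw [hnb]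
  have est1 : ∀ x : H1, ‖eK (ιK (γ1 x))‖
      ≤ M * (‖ιH x‖ + ‖T.adjoint ⟨ιH x, hH1_sub x⟩‖) := by
    intro x
    refine estbd _ _ (by positivity) ?_
    intro b
    have hnb : ‖(b, (0 : KK))‖ = ‖b‖ := by
      simp only [Prod.norm_def, norm_zero]
      exact max_eq_left (norm_nonneg b)
    rw [pair1 x b]
    calc ‖(⟪T.adjoint ⟨ιH x, hH1_sub x⟩, ιH (κ (b, 0))⟫ : ℂ)
          - ⟪ιH x, T.adjoint ⟨ιH (κ (b, 0)), hH1_sub (κ (b, 0))⟩⟫‖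
        ≤ M * ((‖ιH x‖ + ‖T.adjoint ⟨ιH x, hH1_sub x⟩‖) * ‖(b, (0 : KK))‖) := genbd x (b, 0)
      _ = M * ((‖ιH x‖ + ‖T.adjoint ⟨ιH x, hH1_sub x⟩‖) * ‖b‖) := by rw [hnb]
  -- the maps into the graph
  let gdom : T.adjoint.domain →ₗ[ℂ] T.adjoint.graph :=
    LinearMap.codRestrict T.adjoint.graph
      (LinearMap.prod T.adjoint.domain.subtype T.adjoint.toFun)
      (fun u => T.adjoint.mem_graph u)
  let d : H1 →ₗ[ℂ] T.adjoint.domain :=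
    LinearMap.codRestrict T.adjoint.domain (ιH : H1 →L[ℂ] H0).toLinearMap hH1_sub
  let jL : H1 →ₗ[ℂ] T.adjoint.graph := gdom.comp d
  have hjx : ∀ x : H1, (jL x : H0 × H0) = (ιH x, T.adjoint ⟨ιH x, hH1_sub x⟩) :=
    fun x => rfl
  have hjinj : Function.Injective ⇑jL := by
    intro x y h
    apply hιH_inj
    have h2 := congrArg (fun s : T.adjoint.graph => (s : H0 × H0).1) h
    simpa [hjx] using h2
  have hdr : DenseRange ⇑jL := by
    rw [Metric.denseRange_iff]
    intro g ε hε
    obtain ⟨u, hu1, hu2⟩ := T.adjoint.mem_graph_iff.mp g.2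
    obtain ⟨x, hx⟩ := hH1_graphdense u ε hε
    refine ⟨x, ?_⟩
    have hd : dist g (jL x)
        ≤ ‖(u : H0) - ιH x‖ + ‖T.adjoint u - T.adjoint ⟨ιH x, hH1_sub x⟩‖ := by
      rw [Subtype.dist_eq, hjx x, Prod.dist_eq]
      simp only
      rw [← hu1, ← hu2, dist_eq_norm, dist_eq_norm]
      exact max_le_add_of_nonneg (norm_nonneg _) (norm_nonneg _)
    exact hd.trans_lt hx
  letI iG1 : NormedAddCommGroup T.adjoint.graph := Submodule.normedAddCommGroup _
  letI iG2 : NormedSpace ℂ T.adjoint.graph := Submodule.normedSpace _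
  set S : Submodule ℂ T.adjoint.graph := LinearMap.range jL with hS
  letI iS1 : NormedAddCommGroup S := Submodule.normedAddCommGroup S
  letI iS2 : NormedSpace ℂ S := Submodule.normedSpace S
  have hdS : DenseRange ⇑S.subtypeL := by
    have h1 : Set.range ⇑S.subtypeL = (S : Set T.adjoint.graph) := Subtype.range_coe
    unfold DenseRange
    rw [h1, hS, LinearMap.coe_range]
    exact hdr
  have hindS : IsUniformInducing ⇑S.subtypeL :=
    isUniformEmbedding_subtype_val.isUniformInducing
  set e0 : H1 ≃ₗ[ℂ] S := LinearEquiv.ofInjective jL hjinj with he0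
  have he0x : ∀ x : H1, (S.subtypeL (e0 x) : T.adjoint.graph) = jL x := by
    intro x
    rw [he0]
    exact LinearEquiv.ofInjective_apply jL (h := hjinj) x
  -- generic extension construction
  have main : ∀ γ : H1 →L[ℂ] KK,
      (∀ x : H1, ‖eK (ιK (γ x))‖ ≤ M * (‖ιH x‖ + ‖T.adjoint ⟨ιH x, hH1_sub x⟩‖)) →
      ∃ Γ' : T.adjoint.graph →L[ℂ] K', ∀ x : H1, Γ' (jL x) = eK (ιK (γ x)) := by
    intro γ hest
    set ψ0 : S →ₗ[ℂ] K' :=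
      ((eK.comp (ιK.comp γ)).toLinearMap).comp e0.symm.toLinearMap with hψ0
    have hψval : ∀ x : H1, ψ0 (e0 x) = eK (ιK (γ x)) := by
      intro x
      rw [hψ0]
      simp [LinearEquiv.symm_apply_apply]
    have hψbd : ∀ s : S, ‖ψ0 s‖ ≤ (2 * M) * ‖s‖ := by
      intro s
      have hsx : (s : T.adjoint.graph) = jL (e0.symm s) := by
        conv_lhs => rw [← e0.apply_symm_apply s]
        rw [← he0x (e0.symm s)]
        rfl
      have h1 : ψ0 s = eK (ιK (γ (e0.symm s))) := by
        rw [hψ0]; rfl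
      have h3 : ‖s‖ = max ‖ιH (e0.symm s)‖ ‖T.adjoint ⟨ιH (e0.symm s), hH1_sub (e0.symm s)⟩‖ := by
        have : ‖s‖ = ‖(s : T.adjoint.graph)‖ := rfl
        rw [this, hsx]
        have h9 : ‖(jL (e0.symm s))‖ = ‖(jL (e0.symm s) : H0 × H0)‖ := rfl
        rw [h9]
        simp only [hjx, Prod.norm_def]
      have h4 := hest (e0.symm s)
      rw [h1, h3]
      have h5 := le_max_left ‖ιH (e0.symm s)‖ ‖T.adjoint ⟨ιH (e0.symm s), hH1_sub (e0.symm s)⟩‖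
      have h6 := le_max_right ‖ιH (e0.symm s)‖ ‖T.adjoint ⟨ιH (e0.symm s), hH1_sub (e0.symm s)⟩‖
      nlinarith [hMnn, norm_nonneg (ιH (e0.symm s))]
    refine ⟨(LinearMap.mkContinuous ψ0 (2 * M) hψbd).extend S.subtypeL, ?_⟩
    intro x
    have hx1 : S.subtypeL (e0 x) = jL x := he0x x
    rw [← hx1, ContinuousLinearMap.extend_eq _ hdS hindS]
    rw [LinearMap.mkContinuous_apply]
    exact hψval x
  obtain ⟨Γ0', hΓ0'⟩ := main γ0 est0
  obtain ⟨Γ1', hΓ1'⟩ := main γ1 est1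
  have hgd : ∀ x : H1, gdom ⟨ιH x, hH1_sub x⟩ = jL x := fun x => rfl
  refine ⟨Γ0'.toLinearMap.comp gdom, Γ1'.toLinearMap.comp gdom, ?_, ?_, ?_, ?_⟩
  · intro x
    show Γ0' (gdom ⟨ιH x, hH1_sub x⟩) = _
    rw [hgd x, hΓ0' x]
  · intro x
    show Γ1' (gdom ⟨ιH x, hH1_sub x⟩) = _
    rw [hgd x, hΓ1' x]
  · refine ⟨‖Γ0'‖ + ‖Γ1'‖ + 1, by positivity, ?_⟩
    intro u
    have h1 : ‖Γ0' (gdom u)‖ ≤ ‖Γ0'‖ * ‖gdom u‖ := Γ0'.le_opNorm _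
    have h2 : ‖Γ1' (gdom u)‖ ≤ ‖Γ1'‖ * ‖gdom u‖ := Γ1'.le_opNorm _
    have h3 : ‖gdom u‖ ≤ ‖(u : H0)‖ + ‖T.adjoint u‖ := by
      have h0 : ‖gdom u‖ = max ‖(u : H0)‖ ‖T.adjoint u‖ := by
        have : ‖gdom u‖ = ‖(gdom u : H0 × H0)‖ := rfl
        rw [this]
        rfl
      rw [h0]
      exact max_le_add_of_nonneg (norm_nonneg _) (norm_nonneg _)
    show ‖Γ0' (gdom u)‖ + ‖Γ1' (gdom u)‖ ≤ _
    have h4 := mul_le_mul_of_nonneg_left h3 (ContinuousLinearMap.opNorm_nonneg Γ0')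
    have h5 := mul_le_mul_of_nonneg_left h3 (ContinuousLinearMap.opNorm_nonneg Γ1')
    have hnn : (0:ℝ) ≤ ‖(u : H0)‖ + ‖T.adjoint u‖ := by positivity
    linarith
  · intro u v
    have hF : Continuous (fun g : T.adjoint.graph =>
        (⟪(g : H0 × H0).2, ιH v⟫ : ℂ)
          - ⟪(g : H0 × H0).1, T.adjoint ⟨ιH v, hH1_sub v⟩⟫) := by
      refine Continuous.sub ?_ ?_
      · exact (continuous_snd.comp continuous_subtype_val).inner continuous_const
      · exact (continuous_fst.comp continuous_subtype_val).inner continuous_const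
    have hG : Continuous (fun g : T.adjoint.graph =>
        p (Γ1' g) (γ0 v) - p (Γ0' g) (γ1 v)) :=
      ((hp_cont (γ0 v)).comp Γ1'.continuous).sub ((hp_cont (γ1 v)).comp Γ0'.continuous)
    have heq : Set.EqOn
        (fun g : T.adjoint.graph =>
          (⟪(g : H0 × H0).2, ιH v⟫ : ℂ)
            - ⟪(g : H0 × H0).1, T.adjoint ⟨ιH v, hH1_sub v⟩⟫)
        (fun g : T.adjoint.graph => p (Γ1' g) (γ0 v) - p (Γ0' g) (γ1 v))
        (Set.range ⇑jL) := by
      rintro _ ⟨x, rfl⟩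
      show (⟪(jL x : H0 × H0).2, ιH v⟫ : ℂ)
          - ⟪(jL x : H0 × H0).1, T.adjoint ⟨ιH v, hH1_sub v⟩⟫
          = p (Γ1' (jL x)) (γ0 v) - p (Γ0' (jL x)) (γ1 v)
      rw [hΓ0' x, hΓ1' x, hp_compat, hp_compat]
      show (⟪T.adjoint ⟨ιH x, hH1_sub x⟩, ιH v⟫ : ℂ)
          - ⟪ιH x, T.adjoint ⟨ιH v, hH1_sub v⟩⟫
          = ⟪ιK (γ1 x), ιK (γ0 v)⟫ - ⟪ιK (γ0 x), ιK (γ1 v)⟫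
      exact hLagrange x v
    have hfg := Continuous.ext_on hdr hF hG heq
    have h9 := congrFun hfg (gdom u)
    exact h9
end

section
/- In the abstract boundary-problem setup with invertible reference operator A = T*|Ker γ₀, define γ(0) : K' → Ker T* as the inverse of Γ₀|Ker T*, M(0) = Γ₁ ∘ γ(0) : K' → K', and the reduced boundary operator 𝚪₁ = Γ₁ − M(0) ∘ Γ₀. Then 𝚪₁ = Γ₁ ∘ p, where p : D(T*) → D(A) is the projection u ↦ A⁻¹ T* u, and consequently the image of 𝚪₁ is contained in K. -/
open scoped ComplexInnerProductSpace

/-- In the abstract boundary-problem setup with invertible reference operator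
`A = T*|Ker γ₀`, let `γ(0) : K' → Ker T*` be the inverse of `Γ₀|Ker T*` (here `G0inv`),
`M(0) = Γ₁ ∘ γ(0)`, and let `𝚪₁ = Γ₁ − M(0) ∘ Γ₀` be the reduced boundary operator. Then
`𝚪₁ = Γ₁ ∘ p`, where `p : D(T*) → D(A)` is the projection `u ↦ A⁻¹ T* u`, and consequently
the image of `𝚪₁` is contained in `K`. -/
theorem stmt_14
    {H0 H1 Kb KK K' : Type*}
    [NormedAddCommGroup H0] [InnerProductSpace ℂ H0] [CompleteSpace H0]
    [NormedAddCommGroup H1] [InnerProductSpace ℂ H1] [CompleteSpace H1]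
    [NormedAddCommGroup Kb] [InnerProductSpace ℂ Kb] [CompleteSpace Kb]
    [NormedAddCommGroup KK] [InnerProductSpace ℂ KK] [CompleteSpace KK]
    [NormedAddCommGroup K'] [InnerProductSpace ℂ K'] [CompleteSpace K']
    (T : H0 →ₗ.[ℂ] H0)
    (hT_dense : Dense (T.domain : Set H0))
    (hT_closed : IsClosed (T.graph : Set (H0 × H0)))
    (hT_symm : ∀ u v : T.domain, ⟪T u, (v : H0)⟫ = ⟪(u : H0), T v⟫)
    (ιH : H1 →L[ℂ] H0) (hιH_inj : Function.Injective ιH) (hιH_dense : DenseRange ιH)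
    (ιK : KK →L[ℂ] Kb) (hιK_inj : Function.Injective ιK) (hιK_dense : DenseRange ιK)
    (eK : Kb →L[ℂ] K') (heK_inj : Function.Injective eK) (heK_dense : DenseRange eK)
    (heK_inner : ∀ u v : Kb, ⟪eK u, eK v⟫ =
      ⟪(ContinuousLinearMap.adjoint ιK) u, (ContinuousLinearMap.adjoint ιK) v⟫)
    (hH1_sub : ∀ x : H1, ιH x ∈ T.adjoint.domain)
    (hH1_graphdense : ∀ u : T.adjoint.domain, ∀ ε > (0 : ℝ), ∃ x : H1,
        ‖(u : H0) - ιH x‖ + ‖T.adjoint u - T.adjoint ⟨ιH x, hH1_sub x⟩‖ < ε)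
    (hT_bdd : ∃ C : ℝ, ∀ x : H1, ‖T.adjoint ⟨ιH x, hH1_sub x⟩‖ ≤ C * ‖x‖)
    (γ0 γ1 : H1 →L[ℂ] KK)
    (κ : (KK × KK) →L[ℂ] H1)
    (hκ : ∀ ab : KK × KK, γ0 (κ ab) = ab.1 ∧ γ1 (κ ab) = ab.2)
    (hker : ∀ x : H1, (γ0 x = 0 ∧ γ1 x = 0) ↔ ιH x ∈ T.domain)
    (hLagrange : ∀ u v : H1,
        ⟪T.adjoint ⟨ιH u, hH1_sub u⟩, ιH v⟫ - ⟪ιH u, T.adjoint ⟨ιH v, hH1_sub v⟩⟫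
          = ⟪ιK (γ1 u), ιK (γ0 v)⟫ - ⟪ιK (γ0 u), ιK (γ1 v)⟫)
    (p : K' → KK → ℂ)
    (hp_cont : ∀ x : KK, Continuous fun y : K' => p y x)
    (hp_compat : ∀ (w : Kb) (x : KK), p (eK w) x = ⟪w, ιK x⟫)
    (Γ0 Γ1 : T.adjoint.domain →ₗ[ℂ] K')
    (hΓ0_ext : ∀ x : H1, Γ0 ⟨ιH x, hH1_sub x⟩ = eK (ιK (γ0 x)))
    (hΓ1_ext : ∀ x : H1, Γ1 ⟨ιH x, hH1_sub x⟩ = eK (ιK (γ1 x)))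
    (hΓ_bdd : ∃ C > (0 : ℝ), ∀ u : T.adjoint.domain,
        ‖Γ0 u‖ + ‖Γ1 u‖ ≤ C * (‖(u : H0)‖ + ‖T.adjoint u‖))
    (hLagrange_ext : ∀ (u : T.adjoint.domain) (v : H1),
        ⟪T.adjoint u, ιH v⟫ - ⟪(u : H0), T.adjoint ⟨ιH v, hH1_sub v⟩⟫
          = p (Γ1 u) (γ0 v) - p (Γ0 u) (γ1 v))
    (A : H0 →ₗ.[ℂ] H0) (hA_le : A ≤ T.adjoint) (hA_sa : A.adjoint = A)
    (hA_dom : (A.domain : Set H0) = ιH '' {x : H1 | γ0 x = 0})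
    (Ainv : H0 →L[ℂ] H0)
    (hAinv_mem : ∀ x : H0, Ainv x ∈ A.domain)
    (hAinv_right : ∀ x : H0, A ⟨Ainv x, hAinv_mem x⟩ = x)
    (hAinv_left : ∀ a : A.domain, Ainv (A a) = (a : H0))
    (hAinv_memT : ∀ x : H0, Ainv x ∈ T.adjoint.domain)
    (G0inv : K' → T.adjoint.domain)
    (hG0inv_ker : ∀ y : K', T.adjoint (G0inv y) = 0)
    (hG0inv_sec : ∀ y : K', Γ0 (G0inv y) = y) :
    ∀ u : T.adjoint.domain,
      Γ1 u - Γ1 (G0inv (Γ0 u)) = Γ1 ⟨Ainv (T.adjoint u), hAinv_memT (T.adjoint u)⟩ ∧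
      ∃ k : KK, Γ1 u - Γ1 (G0inv (Γ0 u)) = eK (ιK k) := by
  -- auxiliary facts about p
  have hp0 : ∀ y : K', p y 0 = 0 := by
    have h : (fun y : K' => p y 0) = fun _ : K' => (0 : ℂ) := by
      refine heK_dense.equalizer (hp_cont 0) continuous_const ?_
      funext w
      simp [Function.comp, hp_compat]
    intro y
    exact congrFun h y
  have hp0' : ∀ x : KK, p 0 x = 0 := by
    intro x
    have h := hp_compat 0 x
    simpa using h
  -- uniqueness: an element of Ker T* with Γ0 = 0 vanishes
  have huniq : ∀ w : T.adjoint.domain, T.adjoint w = 0 → Γ0 w = 0 → w = 0 := by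
    intro w hw hΓw
    have horth : ∀ z : H0, ⟪(w : H0), z⟫ = 0 := by
      intro z
      obtain ⟨y, hy0, hyι⟩ : ∃ y : H1, γ0 y = 0 ∧ ιH y = Ainv z := by
        have hz : Ainv z ∈ (A.domain : Set H0) := hAinv_mem z
        rw [hA_dom] at hz
        obtain ⟨y, hy, hye⟩ := hz
        exact ⟨y, hy, hye⟩
      have hz : T.adjoint ⟨ιH y, hH1_sub y⟩ = z := by
        have h1 : A ⟨Ainv z, hAinv_mem z⟩ = T.adjoint ⟨ιH y, hH1_sub y⟩ :=
          hA_le.2 (by simp [hyι])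
        rw [← h1, hAinv_right]
      have hl := hLagrange_ext w y
      rw [hw, hΓw, hy0, hz] at hl
      simpa [hp0, hp0'] using hl
    have : ⟪(w : H0), (w : H0)⟫ = 0 := horth w
    have hw0 : (w : H0) = 0 := inner_self_eq_zero.mp this
    exact Subtype.ext hw0
  intro u
  set pu : T.adjoint.domain := ⟨Ainv (T.adjoint u), hAinv_memT (T.adjoint u)⟩ with hpu
  obtain ⟨x, hx0, hxι⟩ : ∃ x : H1, γ0 x = 0 ∧ ιH x = Ainv (T.adjoint u) := by
    have hz : Ainv (T.adjoint u) ∈ (A.domain : Set H0) := hAinv_mem _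
    rw [hA_dom] at hz
    obtain ⟨x, hx, hxe⟩ := hz
    exact ⟨x, hx, hxe⟩
  have hpu_eq : pu = ⟨ιH x, hH1_sub x⟩ := by
    apply Subtype.ext
    simp [hpu, hxι]
  have hΓ0pu : Γ0 pu = 0 := by
    rw [hpu_eq, hΓ0_ext, hx0]
    simp
  have hΓ1pu : Γ1 pu = eK (ιK (γ1 x)) := by rw [hpu_eq, hΓ1_ext]
  have hTpu : T.adjoint pu = T.adjoint u := by
    have h1 : A ⟨Ainv (T.adjoint u), hAinv_mem _⟩ = T.adjoint pu := hA_le.2 rfl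
    rw [← h1, hAinv_right]
  have hTku : T.adjoint (u - pu) = 0 := by
    rw [LinearPMap.map_sub, hTpu, sub_self]
  have hΓ0ku : Γ0 (u - pu) = Γ0 u := by
    rw [map_sub, hΓ0pu, sub_zero]
  -- show G0inv (Γ0 u) = u - pu
  have hGk : G0inv (Γ0 u) = u - pu := by
    have h1 : T.adjoint (G0inv (Γ0 u) - (u - pu)) = 0 := by
      rw [LinearPMap.map_sub, hG0inv_ker, hTku, sub_self]
    have h2 : Γ0 (G0inv (Γ0 u) - (u - pu)) = 0 := by
      rw [map_sub, hG0inv_sec, hΓ0ku, sub_self]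
    have h3 := huniq _ h1 h2
    have := sub_eq_zero.mp h3
    exact this
  have hmain : Γ1 u - Γ1 (G0inv (Γ0 u)) = Γ1 pu := by
    rw [hGk, map_sub, sub_sub_cancel]
  refine ⟨by simpa [hpu] using hmain, γ1 x, ?_⟩
  rw [hmain, hΓ1pu]
end

section
/- In the abstract boundary-problem setup with invertible reference operator A = T*|Ker γ₀ and reduced boundary operator 𝚪₁ = Γ₁ − M(0)∘Γ₀, for every u ∈ D(T*) and v ∈ Ker T* one has ⟨T* u, v⟩ = ⟨𝚪₁ u, Γ₀ v⟩_{K,K'}. -/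
open scoped ComplexInnerProductSpace

/-- In the abstract boundary-problem setup with invertible reference operator
`A = T*|Ker γ₀` and reduced boundary operator `𝚪₁ = Γ₁ − M(0) ∘ Γ₀`
(`M(0) = Γ₁ ∘ (Γ₀|Ker T*)⁻¹`, the inverse being `G0inv`), for every `u ∈ D(T*)` and
`v ∈ Ker T*` one has `⟪T* u, v⟫ = ⟨𝚪₁ u, Γ₀ v⟩_{K,K'}`.  The value `𝚪₁ u ∈ K` is
represented by a witness `k ∈ K`, and the pairing `⟨k, y⟩_{K,K'}` equals `conj (p y k)`
where `p` is the canonical `K'`-`K` pairing. -/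
theorem stmt_15
    {H0 H1 Kb KK K' : Type*}
    [NormedAddCommGroup H0] [InnerProductSpace ℂ H0] [CompleteSpace H0]
    [NormedAddCommGroup H1] [InnerProductSpace ℂ H1] [CompleteSpace H1]
    [NormedAddCommGroup Kb] [InnerProductSpace ℂ Kb] [CompleteSpace Kb]
    [NormedAddCommGroup KK] [InnerProductSpace ℂ KK] [CompleteSpace KK]
    [NormedAddCommGroup K'] [InnerProductSpace ℂ K'] [CompleteSpace K']
    (T : H0 →ₗ.[ℂ] H0)
    (hT_dense : Dense (T.domain : Set H0))
    (hT_closed : IsClosed (T.graph : Set (H0 × H0)))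
    (hT_symm : ∀ u v : T.domain, ⟪T u, (v : H0)⟫ = ⟪(u : H0), T v⟫)
    (ιH : H1 →L[ℂ] H0) (hιH_inj : Function.Injective ιH) (hιH_dense : DenseRange ιH)
    (ιK : KK →L[ℂ] Kb) (hιK_inj : Function.Injective ιK) (hιK_dense : DenseRange ιK)
    (eK : Kb →L[ℂ] K') (heK_inj : Function.Injective eK) (heK_dense : DenseRange eK)
    (heK_inner : ∀ u v : Kb, ⟪eK u, eK v⟫ =
      ⟪(ContinuousLinearMap.adjoint ιK) u, (ContinuousLinearMap.adjoint ιK) v⟫)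
    (hH1_sub : ∀ x : H1, ιH x ∈ T.adjoint.domain)
    (hH1_graphdense : ∀ u : T.adjoint.domain, ∀ ε > (0 : ℝ), ∃ x : H1,
        ‖(u : H0) - ιH x‖ + ‖T.adjoint u - T.adjoint ⟨ιH x, hH1_sub x⟩‖ < ε)
    (hT_bdd : ∃ C : ℝ, ∀ x : H1, ‖T.adjoint ⟨ιH x, hH1_sub x⟩‖ ≤ C * ‖x‖)
    (γ0 γ1 : H1 →L[ℂ] KK)
    (κ : (KK × KK) →L[ℂ] H1)
    (hκ : ∀ ab : KK × KK, γ0 (κ ab) = ab.1 ∧ γ1 (κ ab) = ab.2)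
    (hker : ∀ x : H1, (γ0 x = 0 ∧ γ1 x = 0) ↔ ιH x ∈ T.domain)
    (hLagrange : ∀ u v : H1,
        ⟪T.adjoint ⟨ιH u, hH1_sub u⟩, ιH v⟫ - ⟪ιH u, T.adjoint ⟨ιH v, hH1_sub v⟩⟫
          = ⟪ιK (γ1 u), ιK (γ0 v)⟫ - ⟪ιK (γ0 u), ιK (γ1 v)⟫)
    (p : K' → KK → ℂ)
    (hp_cont : ∀ x : KK, Continuous fun y : K' => p y x)
    (hp_compat : ∀ (w : Kb) (x : KK), p (eK w) x = ⟪w, ιK x⟫)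
    (Γ0 Γ1 : T.adjoint.domain →ₗ[ℂ] K')
    (hΓ0_ext : ∀ x : H1, Γ0 ⟨ιH x, hH1_sub x⟩ = eK (ιK (γ0 x)))
    (hΓ1_ext : ∀ x : H1, Γ1 ⟨ιH x, hH1_sub x⟩ = eK (ιK (γ1 x)))
    (hΓ_bdd : ∃ C > (0 : ℝ), ∀ u : T.adjoint.domain,
        ‖Γ0 u‖ + ‖Γ1 u‖ ≤ C * (‖(u : H0)‖ + ‖T.adjoint u‖))
    (hLagrange_ext : ∀ (u : T.adjoint.domain) (v : H1),
        ⟪T.adjoint u, ιH v⟫ - ⟪(u : H0), T.adjoint ⟨ιH v, hH1_sub v⟩⟫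
          = p (Γ1 u) (γ0 v) - p (Γ0 u) (γ1 v))
    (A : H0 →ₗ.[ℂ] H0) (hA_le : A ≤ T.adjoint) (hA_sa : A.adjoint = A)
    (hA_dom : (A.domain : Set H0) = ιH '' {x : H1 | γ0 x = 0})
    (Ainv : H0 →L[ℂ] H0)
    (hAinv_mem : ∀ x : H0, Ainv x ∈ A.domain)
    (hAinv_right : ∀ x : H0, A ⟨Ainv x, hAinv_mem x⟩ = x)
    (hAinv_left : ∀ a : A.domain, Ainv (A a) = (a : H0))
    (hAinv_memT : ∀ x : H0, Ainv x ∈ T.adjoint.domain)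
    (G0inv : K' → T.adjoint.domain)
    (hG0inv_ker : ∀ y : K', T.adjoint (G0inv y) = 0)
    (hG0inv_sec : ∀ y : K', Γ0 (G0inv y) = y) :
    ∀ u v : T.adjoint.domain, T.adjoint v = 0 →
      ∀ k : KK, eK (ιK k) = Γ1 u - Γ1 (G0inv (Γ0 u)) →
        ⟪T.adjoint u, (v : H0)⟫ = (starRingEnd ℂ) (p (Γ0 v) k) := by

  intro u v hv k hk
  set g : T.adjoint.domain := G0inv (Γ0 u) with hg
  set w : T.adjoint.domain := u - g with hw
  have hw0 : Γ0 w = 0 := by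
    rw [hw, map_sub, hg, hG0inv_sec, sub_self]
  have hwT : T.adjoint w = T.adjoint u := by
    rw [hw, LinearPMap.map_sub, hg, hG0inv_ker, sub_zero]
  have hw1 : Γ1 w = eK (ιK k) := by
    rw [hw, map_sub, hg]; exact hk.symm
  have key : ∀ x : H1,
      ⟪T.adjoint u, ιH x⟫ - ⟪(w : H0), T.adjoint ⟨ιH x, hH1_sub x⟩⟫
        = (starRingEnd ℂ) (p (Γ0 ⟨ιH x, hH1_sub x⟩) k) := by
    intro x
    have h := hLagrange_ext w x
    rw [hwT, hw0, hw1] at h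
    have h0 : p (0 : K') (γ1 x) = 0 := by
      have := hp_compat 0 (γ1 x)
      simpa using this
    rw [h0, sub_zero, hp_compat] at h
    rw [h, hΓ0_ext, hp_compat, inner_conj_symm]
  obtain ⟨C, hCpos, hC⟩ := hΓ_bdd
  have hseq : ∀ n : ℕ, ∃ x : H1,
      ‖(v : H0) - ιH x‖ + ‖T.adjoint v - T.adjoint ⟨ιH x, hH1_sub x⟩‖ < 1/(n+1) := by
    intro n
    exact hH1_graphdense v (1/(n+1)) (by positivity)
  choose x hx using hseq
  set vn : ℕ → T.adjoint.domain := fun n => ⟨ιH (x n), hH1_sub (x n)⟩ with hvn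
  have hb : Filter.Tendsto (fun n : ℕ => 1/((n:ℝ)+1)) Filter.atTop (nhds 0) :=
    tendsto_one_div_add_atTop_nhds_zero_nat
  have hx1 : ∀ n, ‖(v : H0) - (vn n : H0)‖ ≤ 1/((n:ℝ)+1) := fun n =>
    le_trans (le_add_of_nonneg_right (norm_nonneg _)) (le_of_lt (hx n))
  have hx2 : ∀ n, ‖T.adjoint v - T.adjoint (vn n)‖ ≤ 1/((n:ℝ)+1) := fun n =>
    le_trans (le_add_of_nonneg_left (norm_nonneg _)) (le_of_lt (hx n))
  have h1 : Filter.Tendsto (fun n => ((vn n : H0))) Filter.atTop (nhds (v : H0)) := by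
    rw [tendsto_iff_norm_sub_tendsto_zero]
    refine squeeze_zero (fun n => norm_nonneg _) (fun n => ?_) hb
    rw [norm_sub_rev]; exact hx1 n
  have h2 : Filter.Tendsto (fun n => T.adjoint (vn n)) Filter.atTop (nhds 0) := by
    rw [show (0 : H0) = T.adjoint v from hv.symm, tendsto_iff_norm_sub_tendsto_zero]
    refine squeeze_zero (fun n => norm_nonneg _) (fun n => ?_) hb
    rw [norm_sub_rev]; exact hx2 n
  have hsL : Filter.Tendsto
      (fun n => ⟪T.adjoint u, (vn n : H0)⟫ - ⟪(w : H0), T.adjoint (vn n)⟫)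
      Filter.atTop (nhds (⟪T.adjoint u, (v : H0)⟫ - ⟪(w : H0), (0 : H0)⟫)) :=
    ((tendsto_const_nhds.inner h1).sub (tendsto_const_nhds.inner h2))
  have hG : Filter.Tendsto (fun n => Γ0 (vn n)) Filter.atTop (nhds (Γ0 v)) := by
    rw [tendsto_iff_norm_sub_tendsto_zero]
    have hCb : Filter.Tendsto (fun n : ℕ => (2*C) * (1/((n:ℝ)+1))) Filter.atTop (nhds 0) := by
      simpa using hb.const_mul (2*C)
    refine squeeze_zero (fun n => norm_nonneg _) (fun n => ?_) hCb
    have h3 := hC (vn n - v)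
    have e1 : ((vn n - v : T.adjoint.domain) : H0) = (vn n : H0) - (v : H0) := rfl
    have e2 : T.adjoint (vn n - v) = T.adjoint (vn n) - T.adjoint v :=
      LinearPMap.map_sub _ _ _
    rw [map_sub, e1, e2] at h3
    have h4 : ‖Γ0 (vn n) - Γ0 v‖ ≤ C * (‖(vn n : H0) - (v : H0)‖ + ‖T.adjoint (vn n) - T.adjoint v‖) :=
      le_trans (le_add_of_nonneg_right (norm_nonneg _)) h3
    refine h4.trans ?_
    rw [show (2*C) * (1/((n:ℝ)+1)) = C * (2 * (1/((n:ℝ)+1))) by ring]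
    apply mul_le_mul_of_nonneg_left _ (le_of_lt hCpos)
    calc ‖(vn n : H0) - (v : H0)‖ + ‖T.adjoint (vn n) - T.adjoint v‖
        = ‖(v : H0) - (vn n : H0)‖ + ‖T.adjoint v - T.adjoint (vn n)‖ := by
          rw [norm_sub_rev, norm_sub_rev (T.adjoint (vn n))]
      _ ≤ 1/((n:ℝ)+1) + 1/((n:ℝ)+1) := add_le_add (hx1 n) (hx2 n)
      _ = 2 * (1/((n:ℝ)+1)) := by ring
  have hsR : Filter.Tendsto
      (fun n => (starRingEnd ℂ) (p (Γ0 (vn n)) k)) Filter.atTop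
      (nhds ((starRingEnd ℂ) (p (Γ0 v) k))) := by
    exact (Complex.continuous_conj.tendsto _).comp (((hp_cont k).tendsto _).comp hG)
  have heq : (fun n => ⟪T.adjoint u, (vn n : H0)⟫ - ⟪(w : H0), T.adjoint (vn n)⟫)
      = fun n => (starRingEnd ℂ) (p (Γ0 (vn n)) k) := funext fun n => key (x n)
  rw [heq] at hsL
  have := tendsto_nhds_unique hsL hsR
  rw [inner_zero_right, sub_zero] at this
  exact this
end

section
/- In the abstract boundary-problem setup with invertible reference operator A and reduced boundary operator 𝚪₁, the reduced Lagrange identity ⟨T*u, v⟩ − ⟨u, T*v⟩ = ⟨𝚪₁u, Γ₀v⟩_{K,K'} − ⟨Γ₀u, 𝚪₁v⟩_{K',K} holds for all u, v ∈ D(T*), the map Γ₀ ⊕ 𝚪₁ : D(T*) → K' ⊕ K is surjective, and Ker(Γ₀ ⊕ 𝚪₁) = D(T). Moreover Ker 𝚪₁ = D(T) ∔ Ker T*. -/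
open scoped ComplexInnerProductSpace

/-- In the abstract boundary-problem setup with invertible reference operator
`A` and reduced boundary operator `𝚪₁ = Γ₁ − M(0) ∘ Γ₀` (with values in `K`, represented by
witnesses `k` with `eK (ιK k) = 𝚪₁ u`), the reduced Lagrange identity
`⟪T*u, v⟫ − ⟪u, T*v⟫ = ⟨𝚪₁u, Γ₀v⟩_{K,K'} − ⟨Γ₀u, 𝚪₁v⟩_{K',K}` holds for all
`u, v ∈ D(T*)`, the map `Γ₀ ⊕ 𝚪₁ : D(T*) → K' ⊕ K` is surjective, and
`Ker(Γ₀ ⊕ 𝚪₁) = D(T)`. Moreover `Ker 𝚪₁ = D(T) ∔ Ker T*`. -/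
theorem stmt_16
    {H0 H1 Kb KK K' : Type*}
    [NormedAddCommGroup H0] [InnerProductSpace ℂ H0] [CompleteSpace H0]
    [NormedAddCommGroup H1] [InnerProductSpace ℂ H1] [CompleteSpace H1]
    [NormedAddCommGroup Kb] [InnerProductSpace ℂ Kb] [CompleteSpace Kb]
    [NormedAddCommGroup KK] [InnerProductSpace ℂ KK] [CompleteSpace KK]
    [NormedAddCommGroup K'] [InnerProductSpace ℂ K'] [CompleteSpace K']
    (T : H0 →ₗ.[ℂ] H0)
    (hT_dense : Dense (T.domain : Set H0))
    (hT_closed : IsClosed (T.graph : Set (H0 × H0)))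
    (hT_symm : ∀ u v : T.domain, ⟪T u, (v : H0)⟫ = ⟪(u : H0), T v⟫)
    (ιH : H1 →L[ℂ] H0) (hιH_inj : Function.Injective ιH) (hιH_dense : DenseRange ιH)
    (ιK : KK →L[ℂ] Kb) (hιK_inj : Function.Injective ιK) (hιK_dense : DenseRange ιK)
    (eK : Kb →L[ℂ] K') (heK_inj : Function.Injective eK) (heK_dense : DenseRange eK)
    (heK_inner : ∀ u v : Kb, ⟪eK u, eK v⟫ =
      ⟪(ContinuousLinearMap.adjoint ιK) u, (ContinuousLinearMap.adjoint ιK) v⟫)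
    (hH1_sub : ∀ x : H1, ιH x ∈ T.adjoint.domain)
    (hH1_graphdense : ∀ u : T.adjoint.domain, ∀ ε > (0 : ℝ), ∃ x : H1,
        ‖(u : H0) - ιH x‖ + ‖T.adjoint u - T.adjoint ⟨ιH x, hH1_sub x⟩‖ < ε)
    (hT_bdd : ∃ C : ℝ, ∀ x : H1, ‖T.adjoint ⟨ιH x, hH1_sub x⟩‖ ≤ C * ‖x‖)
    (γ0 γ1 : H1 →L[ℂ] KK)
    (κ : (KK × KK) →L[ℂ] H1)
    (hκ : ∀ ab : KK × KK, γ0 (κ ab) = ab.1 ∧ γ1 (κ ab) = ab.2)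
    (hker : ∀ x : H1, (γ0 x = 0 ∧ γ1 x = 0) ↔ ιH x ∈ T.domain)
    (hLagrange : ∀ u v : H1,
        ⟪T.adjoint ⟨ιH u, hH1_sub u⟩, ιH v⟫ - ⟪ιH u, T.adjoint ⟨ιH v, hH1_sub v⟩⟫
          = ⟪ιK (γ1 u), ιK (γ0 v)⟫ - ⟪ιK (γ0 u), ιK (γ1 v)⟫)
    (p : K' → KK → ℂ)
    (hp_cont : ∀ x : KK, Continuous fun y : K' => p y x)
    (hp_compat : ∀ (w : Kb) (x : KK), p (eK w) x = ⟪w, ιK x⟫)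
    (Γ0 Γ1 : T.adjoint.domain →ₗ[ℂ] K')
    (hΓ0_ext : ∀ x : H1, Γ0 ⟨ιH x, hH1_sub x⟩ = eK (ιK (γ0 x)))
    (hΓ1_ext : ∀ x : H1, Γ1 ⟨ιH x, hH1_sub x⟩ = eK (ιK (γ1 x)))
    (hΓ_bdd : ∃ C > (0 : ℝ), ∀ u : T.adjoint.domain,
        ‖Γ0 u‖ + ‖Γ1 u‖ ≤ C * (‖(u : H0)‖ + ‖T.adjoint u‖))
    (hLagrange_ext : ∀ (u : T.adjoint.domain) (v : H1),
        ⟪T.adjoint u, ιH v⟫ - ⟪(u : H0), T.adjoint ⟨ιH v, hH1_sub v⟩⟫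
          = p (Γ1 u) (γ0 v) - p (Γ0 u) (γ1 v))
    (A : H0 →ₗ.[ℂ] H0) (hA_le : A ≤ T.adjoint) (hA_sa : A.adjoint = A)
    (hA_dom : (A.domain : Set H0) = ιH '' {x : H1 | γ0 x = 0})
    (Ainv : H0 →L[ℂ] H0)
    (hAinv_mem : ∀ x : H0, Ainv x ∈ A.domain)
    (hAinv_right : ∀ x : H0, A ⟨Ainv x, hAinv_mem x⟩ = x)
    (hAinv_left : ∀ a : A.domain, Ainv (A a) = (a : H0))
    (hAinv_memT : ∀ x : H0, Ainv x ∈ T.adjoint.domain)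
    (G0inv : K' → T.adjoint.domain)
    (hG0inv_ker : ∀ y : K', T.adjoint (G0inv y) = 0)
    (hG0inv_sec : ∀ y : K', Γ0 (G0inv y) = y) :
    (∀ (u v : T.adjoint.domain) (ku kv : KK),
        eK (ιK ku) = Γ1 u - Γ1 (G0inv (Γ0 u)) →
        eK (ιK kv) = Γ1 v - Γ1 (G0inv (Γ0 v)) →
        ⟪T.adjoint u, (v : H0)⟫ - ⟪(u : H0), T.adjoint v⟫
          = (starRingEnd ℂ) (p (Γ0 v) ku) - p (Γ0 u) kv) ∧
    (∀ (y : K') (k : KK), ∃ u : T.adjoint.domain,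
        Γ0 u = y ∧ Γ1 u - Γ1 (G0inv (Γ0 u)) = eK (ιK k)) ∧
    (∀ u : T.adjoint.domain,
        (Γ0 u = 0 ∧ Γ1 u - Γ1 (G0inv (Γ0 u)) = 0) ↔ (u : H0) ∈ T.domain) ∧
    (∀ u : T.adjoint.domain,
        Γ1 u - Γ1 (G0inv (Γ0 u)) = 0 ↔
          ∃ a ∈ T.domain, ∃ z : T.adjoint.domain,
            T.adjoint z = 0 ∧ (u : H0) = a + (z : H0)) := by
  classical
  have hTle : T ≤ T.adjoint :=
    LinearPMap.IsFormalAdjoint.le_adjoint hT_dense hT_symm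
  have hadj : ∀ (x : T.adjoint.domain) (y : T.domain),
      ⟪T.adjoint x, (y : H0)⟫ = ⟪(x : H0), T y⟫ :=
    LinearPMap.adjoint_isFormalAdjoint hT_dense
  -- `p` vanishes when either argument is zero
  have hp0 : ∀ y : K', p y 0 = 0 := by
    have h := Continuous.ext_on heK_dense (hp_cont 0) (continuous_const (y := (0 : ℂ)))
      (fun y hy => by
        obtain ⟨w, rfl⟩ := hy
        simpa using hp_compat w 0)
    exact fun y => congrFun h y
  have hp0' : ∀ x : KK, p 0 x = 0 := fun x => by
    simpa using hp_compat 0 x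
  -- every element of `H0` is `T* (ιH x)` for some `x` with `γ0 x = 0`
  have hsurjA : ∀ y : H0, ∃ x : H1, γ0 x = 0 ∧ T.adjoint ⟨ιH x, hH1_sub x⟩ = y := by
    intro y
    have hmem : Ainv y ∈ (A.domain : Set H0) := hAinv_mem y
    rw [hA_dom] at hmem
    obtain ⟨x, hx0, hxe⟩ := hmem
    refine ⟨x, hx0, ?_⟩
    have h1 : A ⟨Ainv y, hAinv_mem y⟩ = T.adjoint ⟨ιH x, hH1_sub x⟩ :=
      hA_le.2 hxe.symm
    rw [← h1, hAinv_right]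
  -- kernel of `(T*, Γ0)` is trivial
  have hzero : ∀ w : T.adjoint.domain, T.adjoint w = 0 → Γ0 w = 0 → w = 0 := by
    intro w hw1 hw2
    have key : ∀ y : H0, ⟪(w : H0), y⟫ = 0 := by
      intro y
      obtain ⟨x, hx0, hxy⟩ := hsurjA y
      have h2 := hLagrange_ext w x
      rw [hw1, hw2, hx0, hp0, hxy, hp0'] at h2
      simpa using h2
    have : (w : H0) = 0 := inner_self_eq_zero.mp (key _)
    exact Subtype.ext (this.trans (ZeroMemClass.coe_zero _).symm)
  -- canonical decomposition
  have hdecomp : ∀ u : T.adjoint.domain, ∃ x : H1, γ0 x = 0 ∧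
      u = ⟨ιH x, hH1_sub x⟩ + G0inv (Γ0 u) ∧
      T.adjoint u = T.adjoint ⟨ιH x, hH1_sub x⟩ ∧
      Γ1 u - Γ1 (G0inv (Γ0 u)) = eK (ιK (γ1 x)) := by
    intro u
    obtain ⟨x, hx0, hTx⟩ := hsurjA (T.adjoint u)
    have hΓ0uA : Γ0 ⟨ιH x, hH1_sub x⟩ = 0 := by
      rw [hΓ0_ext x, hx0]; simp
    have h1 : u - ⟨ιH x, hH1_sub x⟩ - G0inv (Γ0 u) = 0 := by
      apply hzero
      · rw [LinearPMap.map_sub, LinearPMap.map_sub, hTx, hG0inv_ker, sub_zero, sub_self]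
      · rw [map_sub, map_sub, hΓ0uA, hG0inv_sec, sub_zero, sub_self]
    have h2 : u = ⟨ιH x, hH1_sub x⟩ + G0inv (Γ0 u) := by
      rw [sub_sub] at h1
      exact sub_eq_zero.mp h1
    refine ⟨x, hx0, h2, hTx.symm, ?_⟩
    have h4 : Γ1 u = Γ1 ⟨ιH x, hH1_sub x⟩ + Γ1 (G0inv (Γ0 u)) := by
      conv_lhs => rw [h2]
      rw [map_add]
    rw [h4, add_sub_cancel_right, hΓ1_ext]
  -- elements of `D(T)` have vanishing boundary data
  have hDT : ∀ u : T.adjoint.domain, (u : H0) ∈ T.domain →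
      Γ0 u = 0 ∧ Γ1 u = 0 ∧ G0inv (Γ0 u) = 0 := by
    intro u hu
    have hTu : T.adjoint u = T ⟨(u : H0), hu⟩ := (hTle.2 rfl).symm
    have horth : ∀ x' : H1, γ0 x' = 0 → p (Γ0 u) (γ1 x') = 0 := by
      intro x' hx'
      have h := hLagrange_ext u x'
      rw [hx', hp0] at h
      have hinner : ⟪(u : H0), T.adjoint ⟨ιH x', hH1_sub x'⟩⟫
          = ⟪T.adjoint u, ιH x'⟫ := by
        rw [← inner_conj_symm, hadj ⟨ιH x', hH1_sub x'⟩ ⟨(u : H0), hu⟩,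
          inner_conj_symm, hTu]
      rw [hinner, sub_self] at h
      have := h.symm
      rw [zero_sub, neg_eq_zero] at this
      exact this
    have hg : (G0inv (Γ0 u) : H0) = 0 := by
      have key : ∀ y : H0, ⟪((G0inv (Γ0 u)) : H0), y⟫ = 0 := by
        intro y
        obtain ⟨x', hx'0, hx'y⟩ := hsurjA y
        have h := hLagrange_ext (G0inv (Γ0 u)) x'
        rw [hG0inv_ker, hG0inv_sec, hx'0, hp0, hx'y, horth x' hx'0] at h
        simpa using h
      exact inner_self_eq_zero.mp (key _)
    have hg' : G0inv (Γ0 u) = 0 :=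
      Subtype.ext (hg.trans (ZeroMemClass.coe_zero _).symm)
    have hΓ0u : Γ0 u = 0 := by
      rw [← hG0inv_sec (Γ0 u), hg', map_zero]
    obtain ⟨x, hx0, h2, _, hΓ⟩ := hdecomp u
    have hux : (u : H0) = ιH x := by
      conv_lhs => rw [h2]
      rw [hg']
      simp
    have hγ1 : γ1 x = 0 := ((hker x).mpr (hux ▸ hu)).2
    have hΓ1u : Γ1 u = 0 := by
      rw [hg', map_zero, sub_zero] at hΓ
      rw [hΓ, hγ1]
      simp
    exact ⟨hΓ0u, hΓ1u, hg'⟩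
  refine ⟨?_, ?_, ?_, ?_⟩
  · -- reduced Lagrange identity
    intro u v ku kv hku hkv
    obtain ⟨xu, hxu0, hu2, hTu, hΓu⟩ := hdecomp u
    obtain ⟨xv, hxv0, hv2, hTv, hΓv⟩ := hdecomp v
    have hkue : ku = γ1 xu := hιK_inj (heK_inj (hku.trans hΓu))
    have hkve : kv = γ1 xv := hιK_inj (heK_inj (hkv.trans hΓv))
    have hv_coe : (v : H0) = ιH xv + ((G0inv (Γ0 v)) : H0) := by
      conv_lhs => rw [hv2]
      simp
    have I1 := hLagrange_ext u xv
    rw [hxv0, hp0, ← hTv] at I1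
    have I2 := hLagrange_ext (G0inv (Γ0 v)) xu
    rw [hG0inv_ker, hG0inv_sec, hxu0, hp0, ← hTu] at I2
    have hI2 : ⟪((G0inv (Γ0 v)) : H0), (T.adjoint u : H0)⟫ = p (Γ0 v) (γ1 xu) := by
      simp only [inner_zero_left, zero_sub, neg_inj] at I2
      exact I2
    have I2' : ⟪(T.adjoint u : H0), ((G0inv (Γ0 v)) : H0)⟫
        = (starRingEnd ℂ) (p (Γ0 v) (γ1 xu)) := by
      rw [← inner_conj_symm, hI2]
    rw [hv_coe, inner_add_right, hkue, hkve]
    linear_combination I1 + I2'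
  · -- surjectivity
    intro y k
    have hγ0 : γ0 (κ (0, k)) = 0 := (hκ (0, k)).1
    have hγ1 : γ1 (κ (0, k)) = k := (hκ (0, k)).2
    have h0 : Γ0 (G0inv y + ⟨ιH (κ (0, k)), hH1_sub (κ (0, k))⟩) = y := by
      rw [map_add, hG0inv_sec, hΓ0_ext, hγ0]
      simp
    refine ⟨G0inv y + ⟨ιH (κ (0, k)), hH1_sub (κ (0, k))⟩, h0, ?_⟩
    rw [h0, map_add, add_sub_cancel_left, hΓ1_ext, hγ1]
  · -- kernel is D(T)
    intro u
    constructor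
    · rintro ⟨h0, h1⟩
      obtain ⟨x, hx0, h2, _, hΓ⟩ := hdecomp u
      have hg : G0inv (Γ0 u) = 0 := by
        apply hzero
        · exact hG0inv_ker _
        · rw [hG0inv_sec, h0]
      have hux : (u : H0) = ιH x := by
        conv_lhs => rw [h2]
        rw [hg]
        simp
      have hγ1 : γ1 x = 0 := by
        rw [h1] at hΓ
        have : eK (ιK (γ1 x)) = eK (ιK 0) := by
          rw [← hΓ]; simp
        exact hιK_inj (heK_inj this)
      rw [hux]
      exact (hker x).mp ⟨hx0, hγ1⟩
    · intro hu
      obtain ⟨h0, h1, hg⟩ := hDT u hu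
      exact ⟨h0, by rw [h1, hg, map_zero, sub_zero]⟩
  · -- kernel of reduced Γ1
    intro u
    constructor
    · intro h
      obtain ⟨x, hx0, h2, _, hΓ⟩ := hdecomp u
      have hγ1 : γ1 x = 0 := by
        rw [h] at hΓ
        have : eK (ιK (γ1 x)) = eK (ιK 0) := by
          rw [← hΓ]; simp
        exact hιK_inj (heK_inj this)
      refine ⟨ιH x, (hker x).mp ⟨hx0, hγ1⟩, G0inv (Γ0 u), hG0inv_ker _, ?_⟩
      conv_lhs => rw [h2]
      simp
    · rintro ⟨a, ha, z, hz, hu⟩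
      have hmem : ((u - z : T.adjoint.domain) : H0) ∈ T.domain := by
        have : ((u - z : T.adjoint.domain) : H0) = a := by
          push_cast
          rw [hu]; abel
        rw [this]; exact ha
      obtain ⟨h0a, h1a, _⟩ := hDT (u - z) hmem
      have hzg : z = G0inv (Γ0 z) := by
        have h1 : z - G0inv (Γ0 z) = 0 := by
          apply hzero
          · rw [LinearPMap.map_sub, hz, hG0inv_ker, sub_zero]
          · rw [map_sub, hG0inv_sec, sub_self]
        exact sub_eq_zero.mp h1
      have hΓ0u : Γ0 u = Γ0 z := by
        have : Γ0 u = Γ0 (u - z) + Γ0 z := by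
          rw [← map_add, sub_add_cancel]
        rw [this, h0a, zero_add]
      rw [hΓ0u, ← hzg, ← map_sub, h1a]
end

section
/- In the abstract boundary-problem setup, the triple (K^∂, Λ'∘Γ₀, Λ⁻¹∘𝚪₁) is a boundary triplet for T*: the map (Λ'∘Γ₀) ⊕ (Λ⁻¹∘𝚪₁) : D(T*) → K^∂ ⊕ K^∂ is surjective and ⟨T*u, v⟩ − ⟨u, T*v⟩ = ⟨Λ⁻¹𝚪₁u, Λ'Γ₀v⟩_∂ − ⟨Λ'Γ₀u, Λ⁻¹𝚪₁v⟩_∂ for all u, v ∈ D(T*). -/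
open scoped ComplexInnerProductSpace

/-- In the abstract boundary-problem setup, the triple
`(K^∂, Λ' ∘ Γ₀, Λ⁻¹ ∘ 𝚪₁)` is a boundary triplet for `T*`: the map
`(Λ'∘Γ₀) ⊕ (Λ⁻¹∘𝚪₁) : D(T*) → K^∂ ⊕ K^∂` is surjective and
`⟪T*u, v⟫ − ⟪u, T*v⟫ = ⟪Λ⁻¹𝚪₁u, Λ'Γ₀v⟫_∂ − ⟪Λ'Γ₀u, Λ⁻¹𝚪₁v⟫_∂` for all `u, v ∈ D(T*)`.
Here `Λ : K^∂ → K` and `Λ' : K' → K^∂` are the canonical isometric isomorphisms of the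
Gelfand triple `K ⊂ K^∂ ⊂ K'` (with inverse `Λinv` of `Λ`), satisfying
`⟨y, x⟩_{K',K} = ⟪Λ' y, Λ⁻¹ x⟫_∂`, and the values `𝚪₁ u ∈ K` of the reduced boundary
operator are represented by witnesses `ku` with `eK (ιK ku) = 𝚪₁ u`. -/
theorem stmt_17
    {H0 H1 Kb KK K' : Type*}
    [NormedAddCommGroup H0] [InnerProductSpace ℂ H0] [CompleteSpace H0]
    [NormedAddCommGroup H1] [InnerProductSpace ℂ H1] [CompleteSpace H1]
    [NormedAddCommGroup Kb] [InnerProductSpace ℂ Kb] [CompleteSpace Kb]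
    [NormedAddCommGroup KK] [InnerProductSpace ℂ KK] [CompleteSpace KK]
    [NormedAddCommGroup K'] [InnerProductSpace ℂ K'] [CompleteSpace K']
    (T : H0 →ₗ.[ℂ] H0)
    (hT_dense : Dense (T.domain : Set H0))
    (hT_closed : IsClosed (T.graph : Set (H0 × H0)))
    (hT_symm : ∀ u v : T.domain, ⟪T u, (v : H0)⟫ = ⟪(u : H0), T v⟫)
    (ιH : H1 →L[ℂ] H0) (hιH_inj : Function.Injective ιH) (hιH_dense : DenseRange ιH)
    (ιK : KK →L[ℂ] Kb) (hιK_inj : Function.Injective ιK) (hιK_dense : DenseRange ιK)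
    (eK : Kb →L[ℂ] K') (heK_inj : Function.Injective eK) (heK_dense : DenseRange eK)
    (heK_inner : ∀ u v : Kb, ⟪eK u, eK v⟫ =
      ⟪(ContinuousLinearMap.adjoint ιK) u, (ContinuousLinearMap.adjoint ιK) v⟫)
    (hH1_sub : ∀ x : H1, ιH x ∈ T.adjoint.domain)
    (hH1_graphdense : ∀ u : T.adjoint.domain, ∀ ε > (0 : ℝ), ∃ x : H1,
        ‖(u : H0) - ιH x‖ + ‖T.adjoint u - T.adjoint ⟨ιH x, hH1_sub x⟩‖ < ε)
    (hT_bdd : ∃ C : ℝ, ∀ x : H1, ‖T.adjoint ⟨ιH x, hH1_sub x⟩‖ ≤ C * ‖x‖)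
    (γ0 γ1 : H1 →L[ℂ] KK)
    (κ : (KK × KK) →L[ℂ] H1)
    (hκ : ∀ ab : KK × KK, γ0 (κ ab) = ab.1 ∧ γ1 (κ ab) = ab.2)
    (hker : ∀ x : H1, (γ0 x = 0 ∧ γ1 x = 0) ↔ ιH x ∈ T.domain)
    (hLagrange : ∀ u v : H1,
        ⟪T.adjoint ⟨ιH u, hH1_sub u⟩, ιH v⟫ - ⟪ιH u, T.adjoint ⟨ιH v, hH1_sub v⟩⟫
          = ⟪ιK (γ1 u), ιK (γ0 v)⟫ - ⟪ιK (γ0 u), ιK (γ1 v)⟫)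
    (p : K' → KK → ℂ)
    (hp_cont : ∀ x : KK, Continuous fun y : K' => p y x)
    (hp_compat : ∀ (w : Kb) (x : KK), p (eK w) x = ⟪w, ιK x⟫)
    (Γ0 Γ1 : T.adjoint.domain →ₗ[ℂ] K')
    (hΓ0_ext : ∀ x : H1, Γ0 ⟨ιH x, hH1_sub x⟩ = eK (ιK (γ0 x)))
    (hΓ1_ext : ∀ x : H1, Γ1 ⟨ιH x, hH1_sub x⟩ = eK (ιK (γ1 x)))
    (hΓ_bdd : ∃ C > (0 : ℝ), ∀ u : T.adjoint.domain,
        ‖Γ0 u‖ + ‖Γ1 u‖ ≤ C * (‖(u : H0)‖ + ‖T.adjoint u‖))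
    (hLagrange_ext : ∀ (u : T.adjoint.domain) (v : H1),
        ⟪T.adjoint u, ιH v⟫ - ⟪(u : H0), T.adjoint ⟨ιH v, hH1_sub v⟩⟫
          = p (Γ1 u) (γ0 v) - p (Γ0 u) (γ1 v))
    (A : H0 →ₗ.[ℂ] H0) (hA_le : A ≤ T.adjoint) (hA_sa : A.adjoint = A)
    (hA_dom : (A.domain : Set H0) = ιH '' {x : H1 | γ0 x = 0})
    (Ainv : H0 →L[ℂ] H0)
    (hAinv_mem : ∀ x : H0, Ainv x ∈ A.domain)
    (hAinv_right : ∀ x : H0, A ⟨Ainv x, hAinv_mem x⟩ = x)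
    (hAinv_left : ∀ a : A.domain, Ainv (A a) = (a : H0))
    (hAinv_memT : ∀ x : H0, Ainv x ∈ T.adjoint.domain)
    (G0inv : K' → T.adjoint.domain)
    (hG0inv_ker : ∀ y : K', T.adjoint (G0inv y) = 0)
    (hG0inv_sec : ∀ y : K', Γ0 (G0inv y) = y)
    (Λ : Kb →L[ℂ] KK) (Λinv : KK →L[ℂ] Kb) (Λ' : K' →L[ℂ] Kb)
    (hΛ_left : ∀ w : Kb, Λinv (Λ w) = w)
    (hΛ_right : ∀ k : KK, Λ (Λinv k) = k)
    (hΛ'_ext : ∀ w : Kb, Λ' (eK w) = ιK (Λ w))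
    (hpairing : ∀ (x : KK) (y : K'), p y x = ⟪Λ' y, Λinv x⟫) :
    (∀ a b : Kb, ∃ (u : T.adjoint.domain) (ku : KK),
        eK (ιK ku) = Γ1 u - Γ1 (G0inv (Γ0 u)) ∧ Λ' (Γ0 u) = a ∧ Λinv ku = b) ∧
    (∀ (u v : T.adjoint.domain) (ku kv : KK),
        eK (ιK ku) = Γ1 u - Γ1 (G0inv (Γ0 u)) →
        eK (ιK kv) = Γ1 v - Γ1 (G0inv (Γ0 v)) →
        ⟪T.adjoint u, (v : H0)⟫ - ⟪(u : H0), T.adjoint v⟫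
          = ⟪Λinv ku, Λ' (Γ0 v)⟫ - ⟪Λ' (Γ0 u), Λinv kv⟫) := by

  classical
  -- `p` is fully determined by `hpairing`; surjectivity of `Λ'` first.
  have hadj0 : ∀ u w : Kb, (⟪eK u, eK w⟫ : ℂ)
      = ⟪Λ' (eK u), Λinv ((ContinuousLinearMap.adjoint ιK) w)⟫ := by
    intro u w
    rw [heK_inner, ContinuousLinearMap.adjoint_inner_left, ← hp_compat, hpairing]
  have hident : ∀ (y : K') (w : Kb), (⟪y, eK w⟫ : ℂ)
      = ⟪Λ' y, Λinv ((ContinuousLinearMap.adjoint ιK) w)⟫ := by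
    intro y w
    have hfg := Continuous.ext_on (heK_dense : Dense (Set.range eK))
      (Continuous.inner continuous_id continuous_const)
      (Continuous.inner (Λ'.continuous) continuous_const)
      (fun z hz => by
        obtain ⟨u, rfl⟩ := hz
        exact hadj0 u w)
    exact congrFun hfg y
  have hnorm : ∀ w : Kb, ‖(ContinuousLinearMap.adjoint ιK) w‖ = ‖eK w‖ := by
    intro w
    have h := heK_inner w w
    rw [inner_self_eq_norm_sq_to_K, inner_self_eq_norm_sq_to_K] at h
    have h2 : ‖eK w‖ ^ 2 = ‖(ContinuousLinearMap.adjoint ιK) w‖ ^ 2 := by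
      exact_mod_cast h
    nlinarith [norm_nonneg (eK w), norm_nonneg ((ContinuousLinearMap.adjoint ιK) w)]
  have hlow : ∀ y : K', ‖y‖ ≤ ‖Λinv‖ * ‖Λ' y‖ := by
    intro y
    have hbd : ∀ z : K', ‖(⟪y, z⟫ : ℂ)‖ ≤ (‖Λinv‖ * ‖Λ' y‖) * ‖z‖ := by
      intro z
      have hclosed : IsClosed {z : K' | ‖(⟪y, z⟫ : ℂ)‖ ≤ (‖Λinv‖ * ‖Λ' y‖) * ‖z‖} :=
        isClosed_le (Continuous.norm (Continuous.inner continuous_const continuous_id))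
          (continuous_const.mul continuous_norm)
      have hsub : Set.range eK ⊆ {z : K' | ‖(⟪y, z⟫ : ℂ)‖ ≤ (‖Λinv‖ * ‖Λ' y‖) * ‖z‖} := by
        rintro _ ⟨w, rfl⟩
        show ‖(⟪y, eK w⟫ : ℂ)‖ ≤ (‖Λinv‖ * ‖Λ' y‖) * ‖eK w‖
        rw [hident y w]
        calc ‖(⟪Λ' y, Λinv ((ContinuousLinearMap.adjoint ιK) w)⟫ : ℂ)‖
            ≤ ‖Λ' y‖ * ‖Λinv ((ContinuousLinearMap.adjoint ιK) w)‖ := norm_inner_le_norm _ _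
          _ ≤ ‖Λ' y‖ * (‖Λinv‖ * ‖(ContinuousLinearMap.adjoint ιK) w‖) := by
              gcongr
              exact Λinv.le_opNorm _
          _ = (‖Λinv‖ * ‖Λ' y‖) * ‖eK w‖ := by rw [hnorm]; ring
      exact closure_minimal hsub hclosed (heK_dense z)
    have h3 : ‖y‖ * ‖y‖ ≤ (‖Λinv‖ * ‖Λ' y‖) * ‖y‖ := by
      have h4 := hbd y
      have h5 : ‖y‖ * ‖y‖ ≤ ‖(⟪y, y⟫ : ℂ)‖ := by
        rw [← inner_self_eq_norm_mul_norm (𝕜 := ℂ) y]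
        exact RCLike.re_le_norm _
      linarith
    rcases eq_or_lt_of_le (norm_nonneg y) with h | h
    · rw [← h]
      positivity
    · exact le_of_mul_le_mul_right h3 h
  have hsurj : Function.Surjective Λ' := by
    have hanti : AntilipschitzWith ‖Λinv‖₊ Λ' :=
      Λ'.antilipschitz_of_bound fun y => by
        simpa using hlow y
    have hcl : IsClosed (Set.range Λ') := hanti.isClosed_range Λ'.uniformContinuous
    intro a
    have hsub : Set.range ιK ⊆ Set.range Λ' := by
      rintro _ ⟨k, rfl⟩
      exact ⟨eK (Λinv k), by rw [hΛ'_ext, hΛ_right]⟩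
    exact closure_minimal hsub hcl (hιK_dense a)
  constructor
  · -- surjectivity of the boundary map
    intro a b
    obtain ⟨y, hy⟩ := hsurj a
    have hx0 : γ0 (κ (0, Λ b)) = 0 := (hκ (0, Λ b)).1
    have hx1 : γ1 (κ (0, Λ b)) = Λ b := (hκ (0, Λ b)).2
    set x : H1 := κ (0, Λ b) with hxdef
    set e : T.adjoint.domain := ⟨ιH x, hH1_sub x⟩ with hedef
    have hΓ0u : Γ0 (G0inv y + e) = y := by
      rw [map_add, hG0inv_sec, hedef, hΓ0_ext, hx0]
      simp
    refine ⟨G0inv y + e, Λ b, ?_, ?_, hΛ_left b⟩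
    · rw [hΓ0u, map_add, hedef, hΓ1_ext, hx1]
      abel
    · rw [hΓ0u, hy]
  · -- abstract Green identity
    intro u v ku kv hku hkv
    -- Step 1: kernel of (T*, Γ0) is trivial
    have hker0 : ∀ d : T.adjoint.domain, T.adjoint d = 0 → Γ0 d = 0 → (d : H0) = 0 := by
      intro d hd1 hd2
      have hzero : ∀ z : H0, (⟪(d : H0), z⟫ : ℂ) = 0 := by
        intro z
        have hm : Ainv z ∈ ιH '' {x : H1 | γ0 x = 0} := by
          rw [← hA_dom]; exact hAinv_mem z
        obtain ⟨x, hx0, hxe⟩ := hm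
        have hx0' : γ0 x = 0 := hx0
        have h2 := hA_le.2 (x := ⟨Ainv z, hAinv_mem z⟩) (y := ⟨ιH x, hH1_sub x⟩) hxe.symm
        have hTx : T.adjoint ⟨ιH x, hH1_sub x⟩ = z := by rw [← h2, hAinv_right]
        have hL := hLagrange_ext d x
        rw [hd1, hd2, hx0', hTx, hpairing, hpairing] at hL
        simpa using hL
      exact inner_self_eq_zero.mp (hzero (d : H0))
    -- Step 2: elements of ker Γ0 come from H1 with γ0 = 0
    have hrep : ∀ (w : T.adjoint.domain) (k : KK), Γ0 w = 0 → Γ1 w = eK (ιK k) →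
        ∃ x : H1, γ0 x = 0 ∧ γ1 x = k ∧ ιH x = (w : H0) := by
      intro w k hw0 hw1
      have hm : Ainv (T.adjoint w) ∈ ιH '' {x : H1 | γ0 x = 0} := by
        rw [← hA_dom]; exact hAinv_mem _
      obtain ⟨x, hx0, hxe⟩ := hm
      have hx0' : γ0 x = 0 := hx0
      have h2 := hA_le.2 (x := ⟨Ainv (T.adjoint w), hAinv_mem _⟩) (y := ⟨ιH x, hH1_sub x⟩) hxe.symm
      have hTx : T.adjoint ⟨ιH x, hH1_sub x⟩ = T.adjoint w := by rw [← h2, hAinv_right]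
      have hd1 : T.adjoint (w - ⟨ιH x, hH1_sub x⟩) = 0 := by
        rw [T.adjoint.map_sub, hTx, sub_self]
      have hd2 : Γ0 (w - ⟨ιH x, hH1_sub x⟩) = 0 := by
        rw [map_sub, hw0, hΓ0_ext, hx0']
        simp
      have hde := hker0 _ hd1 hd2
      have hde' : (w : H0) - ιH x = 0 := by simpa using hde
      have hwe : (w : H0) = ιH x := by
        have := sub_eq_zero.mp hde'
        exact this
      have hsubty : w = (⟨ιH x, hH1_sub x⟩ : T.adjoint.domain) := Subtype.ext hwe
      have hγ1 : γ1 x = k := by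
        have h1 : Γ1 w = eK (ιK (γ1 x)) := by rw [hsubty]; exact hΓ1_ext x
        rw [hw1] at h1
        exact (hιK_inj (heK_inj h1)).symm
      exact ⟨x, hx0', hγ1, hwe.symm⟩
    -- Step 3: decompose u and v
    set gu : T.adjoint.domain := G0inv (Γ0 u) with hgu
    set gv : T.adjoint.domain := G0inv (Γ0 v) with hgv
    set u0 : T.adjoint.domain := u - gu with hu0
    set v0 : T.adjoint.domain := v - gv with hv0
    have hΓ0u0 : Γ0 u0 = 0 := by rw [hu0, map_sub, hgu, hG0inv_sec, sub_self]
    have hΓ0v0 : Γ0 v0 = 0 := by rw [hv0, map_sub, hgv, hG0inv_sec, sub_self]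
    have hΓ1u0 : Γ1 u0 = eK (ιK ku) := by rw [hu0, map_sub]; exact hku.symm
    have hΓ1v0 : Γ1 v0 = eK (ιK kv) := by rw [hv0, map_sub]; exact hkv.symm
    obtain ⟨xu, hxu0, hxu1, hxue⟩ := hrep u0 ku hΓ0u0 hΓ1u0
    obtain ⟨xv, hxv0, hxv1, hxve⟩ := hrep v0 kv hΓ0v0 hΓ1v0
    have hU : (⟨ιH xu, hH1_sub xu⟩ : T.adjoint.domain) = u0 := Subtype.ext hxue
    have hV : (⟨ιH xv, hH1_sub xv⟩ : T.adjoint.domain) = v0 := Subtype.ext hxve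
    have hTgu : T.adjoint gu = 0 := by rw [hgu]; exact hG0inv_ker _
    have hTgv : T.adjoint gv = 0 := by rw [hgv]; exact hG0inv_ker _
    have hgu0 : Γ0 gu = Γ0 u := by rw [hgu]; exact hG0inv_sec _
    have hgv0 : Γ0 gv = Γ0 v := by rw [hgv]; exact hG0inv_sec _
    -- E1 : the Γ0-kernel parts pair trivially
    have hE1 : (⟪T.adjoint u0, (v0 : H0)⟫ : ℂ) - ⟪(u0 : H0), T.adjoint v0⟫ = 0 := by
      have hL := hLagrange_ext u0 xv
      rw [hV, hΓ0u0, hxv0, hpairing, hpairing, hxve] at hL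
      simpa using hL
    -- E2
    have hE2 : (⟪(gv : H0), T.adjoint u0⟫ : ℂ) = ⟪Λ' (Γ0 v), Λinv ku⟫ := by
      have hL := hLagrange_ext gv xu
      rw [hU, hTgv, hxu0, hxu1, hgv0, hpairing, hpairing] at hL
      simpa using hL
    have hE2' : (⟪T.adjoint u0, (gv : H0)⟫ : ℂ) = ⟪Λinv ku, Λ' (Γ0 v)⟫ := by
      calc (⟪T.adjoint u0, (gv : H0)⟫ : ℂ)
          = (starRingEnd ℂ) ⟪(gv : H0), T.adjoint u0⟫ := (inner_conj_symm _ _).symm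
        _ = (starRingEnd ℂ) ⟪Λ' (Γ0 v), Λinv ku⟫ := by rw [hE2]
        _ = ⟪Λinv ku, Λ' (Γ0 v)⟫ := inner_conj_symm _ _
    -- E3
    have hE3 : (⟪(gu : H0), T.adjoint v0⟫ : ℂ) = ⟪Λ' (Γ0 u), Λinv kv⟫ := by
      have hL := hLagrange_ext gu xv
      rw [hV, hTgu, hxv0, hxv1, hgu0, hpairing, hpairing] at hL
      simpa using hL
    -- assemble
    have hu' : u = u0 + gu := by rw [hu0]; abel
    have hv' : v = v0 + gv := by rw [hv0]; abel
    have hTu : T.adjoint u = T.adjoint u0 := by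
      conv_lhs => rw [hu']
      rw [T.adjoint.map_add, hTgu, add_zero]
    have hTv : T.adjoint v = T.adjoint v0 := by
      conv_lhs => rw [hv']
      rw [T.adjoint.map_add, hTgv, add_zero]
    have hcu : (u : H0) = (u0 : H0) + (gu : H0) := by rw [hu', Submodule.coe_add]
    have hcv : (v : H0) = (v0 : H0) + (gv : H0) := by rw [hv', Submodule.coe_add]
    calc (⟪T.adjoint u, (v : H0)⟫ : ℂ) - ⟪(u : H0), T.adjoint v⟫
        = (⟪T.adjoint u0, (v0 : H0)⟫ - ⟪(u0 : H0), T.adjoint v0⟫)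
            + ⟪T.adjoint u0, (gv : H0)⟫ - ⟪(gu : H0), T.adjoint v0⟫ := by
          rw [hTu, hTv, hcu, hcv, inner_add_right, inner_add_left]; ring
      _ = ⟪Λinv ku, Λ' (Γ0 v)⟫ - ⟪Λ' (Γ0 u), Λinv kv⟫ := by
          rw [hE1, hE2', hE3]; ring
end

section
/- Let Σ, Υ be bounded operators on K^∂ ⊕ K^∂ with Σ self-adjoint and invertible, Υ unitary, and Υ commuting with Σ. Let 𝒞 = { (u, Υu) : u ∈ K^∂ ⊕ K^∂ } be the graph of Υ, and let Σ̂ = Σ ⊕ (−Σ) act on (K^∂ ⊕ K^∂) ⊕ (K^∂ ⊕ K^∂). Then Σ̂(𝒞) equals the orthogonal complement of 𝒞, i.e., the boundary condition defined by 𝒞 is self-adjoint. -/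
open scoped ComplexInnerProductSpace

/-- For `Σ` bounded self-adjoint invertible and `Υ` unitary on `K^∂ ⊕ K^∂`
(modelled as a Hilbert space `E`), with `Υ` commuting with `Σ`, the image under
`Σ̂ = Σ ⊕ (−Σ)` of the graph `𝒞` of `Υ` equals the orthogonal complement of `𝒞`. -/
theorem stmt_19
    {E : Type*} [NormedAddCommGroup E] [InnerProductSpace ℂ E] [CompleteSpace E]
    (S U : E →L[ℂ] E)
    (hS_sa : IsSelfAdjoint S)
    (hS_bij : Function.Bijective S)
    (hU_inner : ∀ x y : E, ⟪U x, U y⟫ = ⟪x, y⟫)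
    (hU_surj : Function.Surjective U)
    (hcomm : ∀ x : E, S (U x) = U (S x)) :
    {w : E × E | ∃ u : E, w = (S u, -S (U u))} =
      {w : E × E | ∀ u : E, ⟪w.1, u⟫ + ⟪w.2, U u⟫ = 0} := by
  ext w
  constructor
  · rintro ⟨u, rfl⟩ v
    simp only [inner_neg_left, hcomm, hU_inner]
    ring
  · intro hw
    obtain ⟨u, hu⟩ := hS_bij.2 w.1
    refine ⟨u, ?_⟩
    have hkey : ∀ x : E, ⟪w.2 + U w.1, x⟫ = 0 := by
      intro x
      obtain ⟨v, rfl⟩ := hU_surj x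
      rw [inner_add_left, hU_inner]
      have := hw v
      linear_combination this
    have hz : w.2 + U w.1 = 0 := by
      have := hkey (w.2 + U w.1)
      rwa [inner_self_eq_zero] at this
    have hw2 : w.2 = -U w.1 := eq_neg_of_add_eq_zero_left hz
    rw [hcomm, hu, ← hw2]
end
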